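/- arXiv:2212.08314 — 15 statements merged into one kernel-verified Lean document; each statement's English description precedes it below -/
import Mathlib

section
/- Let W_{E_0} be a unit of H and let u, v ∈ W_{E_0} with δ_V(u) = δ_V(v) = c. Then for every x ∈ ℝ^V, (Lx)(u) − (Lx)(v) = −(Σ_{e∈E_0} δ_E(e)/(c·|e|))·(x(u) − x(v)). -/
open Finset

/-- The general diffusion operator of a hypergraph. -/
noncomputable def Lop {V : Type*} [Fintype V] [DecidableEq V]
    (E : Finset (Finset V)) (δV : V → ℝ) (δE : Finset V → ℝ)
    (x : V → ℝ) (v : V) : ℝ :=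
  ∑ e ∈ E.filter (fun e => v ∈ e),
    (δE e / δV v) * (1 / (e.card : ℝ) ^ 2) * ∑ u ∈ e, (x u - x v)

/-- The star of a vertex: the set of hyperedges containing it. -/
def starOf {V : Type*} [Fintype V] [DecidableEq V]
    (E : Finset (Finset V)) (v : V) : Finset (Finset V) :=
  E.filter (fun e => v ∈ e)

/-- The unit `W_{E₀}`: the set of vertices whose star equals `E₀`. -/
def unitOf {V : Type*} [Fintype V] [DecidableEq V]
    (E : Finset (Finset V)) (E₀ : Finset (Finset V)) : Finset V :=
  Finset.univ.filter (fun v => starOf E v = E₀)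

/-- For two vertices `u, v` in a unit `W_{E₀}` with the same vertex weight `c`,
`(Lx)(u) - (Lx)(v) = -(Σ_{e∈E₀} δE e/(c·|e|))·(x u - x v)` for every `x`. -/
theorem diffusion_diff_on_unit {V : Type*} [Fintype V] [DecidableEq V]
    (E : Finset (Finset V)) (hE : ∀ e ∈ E, 2 ≤ e.card)
    (δV : V → ℝ) (hδV : ∀ v, 0 < δV v)
    (δE : Finset V → ℝ) (hδE : ∀ e ∈ E, 0 < δE e)
    (E₀ : Finset (Finset V)) (hE₀ : E₀ ⊆ E)
    (hne : (unitOf E E₀).Nonempty)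
    (u v : V) (hu : u ∈ unitOf E E₀) (hv : v ∈ unitOf E E₀)
    (c : ℝ) (hcu : δV u = c) (hcv : δV v = c)
    (x : V → ℝ) :
    Lop E δV δE x u - Lop E δV δE x v
      = -(∑ e ∈ E₀, δE e / (c * (e.card : ℝ))) * (x u - x v) := by
  have hu' : E.filter (fun e => u ∈ e) = E₀ := (Finset.mem_filter.mp hu).2
  have hv' : E.filter (fun e => v ∈ e) = E₀ := (Finset.mem_filter.mp hv).2
  have hc : c ≠ 0 := by rw [← hcu]; exact (hδV u).ne'
  unfold Lop
  rw [hu', hv', hcu, hcv, ← Finset.sum_sub_distrib, neg_mul, Finset.sum_mul,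
    ← Finset.sum_neg_distrib]
  refine Finset.sum_congr rfl fun e he => ?_
  have hn : (e.card : ℝ) ≠ 0 := by
    have := hE e (hE₀ he); positivity
  have hsum : (∑ w ∈ e, (x w - x u)) - (∑ w ∈ e, (x w - x v))
      = (e.card : ℝ) * (x v - x u) := by
    rw [← Finset.sum_sub_distrib]
    simp [Finset.sum_const, mul_comm, sub_sub_sub_cancel_left]
    ring
  rw [← mul_sub, hsum]
  field_simp
  ring
end

section
/- Let W_{E_0} be a unit of H and let U ⊆ W_{E_0} with |U| ≥ 2 and δ_V(v) = c for all v ∈ U. Then T_U is an invariant subspace of the general diffusion operator L, i.e., L(x) ∈ T_U for every x ∈ T_U; moreover every x ∈ T_U is an eigenvector of L with eigenvalue −Σ_{e∈E_0} δ_E(e)/(c·|e|). -/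
open Finset

/-- Membership in the space `T_U = {x : supp x ⊆ U, Σ_{v∈U} x v = 0}`. -/
def memT {V : Type*} [Fintype V] (U : Finset V) (x : V → ℝ) : Prop :=
  (∀ v, v ∉ U → x v = 0) ∧ ∑ v ∈ U, x v = 0

/-- For a subset `U` of a unit `W_{E₀}` with `|U| ≥ 2` and constant vertex
weight `c` on `U`, the space `T_U` is invariant under the diffusion operator `L`;
moreover every `x ∈ T_U` is an eigenvector of `L` with eigenvalue
`-Σ_{e∈E₀} δE e/(c·|e|)`. -/
theorem T_U_invariant {V : Type*} [Fintype V] [DecidableEq V]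
    (E : Finset (Finset V)) (hE : ∀ e ∈ E, 2 ≤ e.card)
    (δV : V → ℝ) (hδV : ∀ v, 0 < δV v)
    (δE : Finset V → ℝ) (hδE : ∀ e ∈ E, 0 < δE e)
    (E₀ : Finset (Finset V)) (hE₀ : E₀ ⊆ E)
    (hne : (unitOf E E₀).Nonempty)
    (U : Finset V) (hU : U ⊆ unitOf E E₀) (hcard : 2 ≤ U.card)
    (c : ℝ) (hc : ∀ v ∈ U, δV v = c)
    (x : V → ℝ) (hx : memT U x) :
    memT U (Lop E δV δE x) ∧
    Lop E δV δE x = (-(∑ e ∈ E₀, δE e / (c * (e.card : ℝ)))) • x := by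
  obtain ⟨hx0, hxs⟩ := hx
  -- Every hyperedge sum of x vanishes.
  have hsum : ∀ e ∈ E, ∑ u ∈ e, x u = 0 := by
    intro e he
    have hfe : ∑ u ∈ e, x u = ∑ u ∈ e.filter (· ∈ U), x u := by
      rw [Finset.sum_filter]
      refine Finset.sum_congr rfl fun u _ => ?_
      by_cases h : u ∈ U
      · simp [h]
      · simp [h, hx0 u h]
    rw [hfe]
    by_cases heE : e ∈ E₀
    · have hfU : e.filter (· ∈ U) = U := by
        ext u
        simp only [Finset.mem_filter]
        constructor
        · exact fun h => h.2
        · intro hu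
          have hst := hU hu
          replace hst : E.filter (fun f => u ∈ f) = E₀ := (Finset.mem_filter.mp hst).2
          refine ⟨?_, hu⟩
          have he0 : e ∈ E.filter (fun f => u ∈ f) := by rw [hst]; exact heE
          exact (Finset.mem_filter.mp he0).2
      rw [hfU]; exact hxs
    · have hfU : e.filter (· ∈ U) = ∅ := by
        rw [Finset.filter_eq_empty_iff]
        intro u hue hu
        have hst := hU hu
        replace hst : E.filter (fun f => u ∈ f) = E₀ := (Finset.mem_filter.mp hst).2
        exact heE (by rw [← hst]; exact Finset.mem_filter.mpr ⟨he, hue⟩)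
      rw [hfU]; simp
  have hc0 : c ≠ 0 := by
    obtain ⟨v, hv⟩ := Finset.card_pos.mp (lt_of_lt_of_le (by norm_num) hcard)
    rw [← hc v hv]; exact ne_of_gt (hδV v)
  have key : ∀ v, Lop E δV δE x v
      = (-(∑ e ∈ E₀, δE e / (c * (e.card : ℝ)))) * x v := by
    intro v
    by_cases hv : v ∈ U
    · have hstar : E.filter (fun e => v ∈ e) = E₀ := by
        have hst := hU hv
        exact (Finset.mem_filter.mp hst).2
      have hδ : δV v = c := hc v hv
      unfold Lop
      rw [hstar, hδ]
      have hrhs : -((∑ e ∈ E₀, δE e / (c * (e.card : ℝ))) * x v)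
          = ∑ e ∈ E₀, -(δE e / (c * (e.card : ℝ)) * x v) := by
        rw [Finset.sum_mul, ← Finset.sum_neg_distrib]
      rw [neg_mul, hrhs]
      refine Finset.sum_congr rfl fun e he => ?_
      have heE : e ∈ E := hE₀ he
      have hcard2 : 2 ≤ e.card := hE e heE
      have hcne : (e.card : ℝ) ≠ 0 := by positivity
      have hsub : ∑ u ∈ e, (x u - x v) = -(e.card : ℝ) * x v := by
        rw [Finset.sum_sub_distrib, Finset.sum_const, hsum e heE, nsmul_eq_mul]
        ring
      rw [hsub]
      field_simp
    · have hxv : x v = 0 := hx0 v hv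
      rw [hxv, mul_zero]
      unfold Lop
      refine Finset.sum_eq_zero fun e he => ?_
      obtain ⟨heE, hve⟩ := Finset.mem_filter.mp he
      have hsub : ∑ u ∈ e, (x u - x v) = 0 := by
        rw [Finset.sum_sub_distrib, Finset.sum_const, hsum e heE, hxv]
        simp
      rw [hsub, mul_zero]
  have heq : Lop E δV δE x = (-(∑ e ∈ E₀, δE e / (c * (e.card : ℝ)))) • x := by
    funext v
    simpa using key v
  refine ⟨⟨fun v hv => ?_, ?_⟩, heq⟩
  · rw [key v, hx0 v hv, mul_zero]
  · calc ∑ v ∈ U, Lop E δV δE x v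
        = ∑ v ∈ U, (-(∑ e ∈ E₀, δE e / (c * (e.card : ℝ)))) * x v :=
          Finset.sum_congr rfl fun v _ => key v
      _ = (-(∑ e ∈ E₀, δE e / (c * (e.card : ℝ)))) * ∑ v ∈ U, x v := by
          rw [Finset.mul_sum]
      _ = 0 := by rw [hxs, mul_zero]
end

section
/- Let {x_t} be a discrete dynamical network on H, let W_{E_0} be a unit of H, and let U ⊆ W_{E_0} with |U| ≥ 2 and δ_V(v) = c for all v ∈ U. If there exist s ∈ ℕ and a constant c_s with x_s(v) = c_s for all v ∈ U, then for every t ≥ s there is a constant c_t with x_t(v) = c_t for all v ∈ U (the subset U of the unit is a synchronization-preserving cluster). -/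
open Finset

/-- A subset `U` of a unit (with `|U| ≥ 2` and constant vertex weight on `U`)
is a synchronization-preserving cluster for any discrete dynamical network:
once the states on `U` agree at time `s`, they agree at every later time. -/
theorem unit_sync_preserving {V : Type*} [Fintype V] [DecidableEq V]
    (E : Finset (Finset V)) (hE : ∀ e ∈ E, 2 ≤ e.card)
    (δV : V → ℝ) (hδV : ∀ v, 0 < δV v)
    (δE : Finset V → ℝ) (hδE : ∀ e ∈ E, 0 < δE e)
    (f g : ℝ → ℝ) (ε : ℝ) (hε : ε ∈ Set.Ioo (0 : ℝ) 1)
    (x : ℕ → V → ℝ)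
    (hdyn : ∀ t v, x (t + 1) v
      = g (x t v) + ε * Lop E δV δE (fun u => f (x t u)) v)
    (E₀ : Finset (Finset V)) (hE₀ : E₀ ⊆ E)
    (hne : (unitOf E E₀).Nonempty)
    (U : Finset V) (hU : U ⊆ unitOf E E₀) (hcard : 2 ≤ U.card)
    (c : ℝ) (hc : ∀ v ∈ U, δV v = c)
    (s : ℕ) (cs : ℝ) (hs : ∀ v ∈ U, x s v = cs) :
    ∀ t ≥ s, ∃ ct : ℝ, ∀ v ∈ U, x t v = ct := by
  intro t ht
  induction t, ht using Nat.le_induction with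
  | base => exact ⟨cs, hs⟩
  | succ t ht ih =>
    obtain ⟨ct, hct⟩ := ih
    obtain ⟨v₀, hv₀⟩ : U.Nonempty := Finset.card_pos.mp (by omega)
    refine ⟨x (t + 1) v₀, fun v hv => ?_⟩
    have hstar : ∀ w ∈ U, E.filter (fun e => w ∈ e) = E₀ := by
      intro w hw
      have := (Finset.mem_filter.mp (hU hw)).2
      simpa [starOf] using this
    rw [hdyn, hdyn]
    have hLop : Lop E δV δE (fun u => f (x t u)) v
        = Lop E δV δE (fun u => f (x t u)) v₀ := by
      unfold Lop
      rw [hstar v hv, hstar v₀ hv₀, hc v hv, hc v₀ hv₀]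
      simp only [hct v hv, hct v₀ hv₀]
    rw [hLop, hct v hv, hct v₀ hv₀]
end

section
/- Let f and g be Lipschitz functions, let t ↦ x_t be a continuous dynamical network on H, let W_{E_0} be a unit of H, and let U ⊆ W_{E_0} with |U| ≥ 2 and δ_V(v) = c for all v ∈ U. If there is a constant c_0 with x_0(v) = c_0 for all v ∈ U, then for every t ≥ 0 there is a constant c_t with x_t(v) = c_t for all v ∈ U. -/
open Finset

lemma Lop_diff {V : Type*} [Fintype V] [DecidableEq V]
    (E : Finset (Finset V)) (δV : V → ℝ) (δE : Finset V → ℝ)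
    (E₀ : Finset (Finset V)) (c : ℝ) (hc0 : c ≠ 0)
    (hcard0 : ∀ e ∈ E₀, (e.card : ℝ) ≠ 0)
    (v w : V) (hv : starOf E v = E₀) (hw : starOf E w = E₀)
    (hδv : δV v = c) (hδw : δV w = c) (z : V → ℝ) :
    Lop E δV δE z v - Lop E δV δE z w
      = (∑ e ∈ E₀, δE e / (c * e.card)) * (z w - z v) := by
  unfold Lop
  unfold starOf at hv hw
  rw [hv, hw, Finset.sum_mul, ← Finset.sum_sub_distrib]
  refine Finset.sum_congr rfl fun e he => ?_
  have h1 : ∑ u ∈ e, (z u - z v) = (∑ u ∈ e, z u) - e.card * z v := by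
    rw [Finset.sum_sub_distrib, Finset.sum_const, nsmul_eq_mul]
  have h2 : ∑ u ∈ e, (z u - z w) = (∑ u ∈ e, z u) - e.card * z w := by
    rw [Finset.sum_sub_distrib, Finset.sum_const, nsmul_eq_mul]
  rw [h1, h2, hδv, hδw]
  have hce := hcard0 e he
  field_simp
  ring

/-- For Lipschitz `f` and `g`, a subset `U` of a unit (with `|U| ≥ 2` and
constant vertex weight on `U`) is a synchronization-preserving cluster for any
continuous-time dynamical network: if all states on `U` agree at time `0`,
they agree at every time `t ≥ 0`. -/
theorem unit_sync_preserving_continuous {V : Type*} [Fintype V] [DecidableEq V]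
    (E : Finset (Finset V)) (hE : ∀ e ∈ E, 2 ≤ e.card)
    (δV : V → ℝ) (hδV : ∀ v, 0 < δV v)
    (δE : Finset V → ℝ) (hδE : ∀ e ∈ E, 0 < δE e)
    (f g : ℝ → ℝ) (Kf Kg : NNReal)
    (hf : LipschitzWith Kf f) (hg : LipschitzWith Kg g)
    (ε : ℝ) (hε : ε ∈ Set.Ioo (0 : ℝ) 1)
    (x : ℝ → V → ℝ)
    (hdyn : ∀ v : V, ∀ t : ℝ, 0 ≤ t →
      HasDerivAt (fun s => x s v)
        (g (x t v) + ε * Lop E δV δE (fun u => f (x t u)) v) t)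
    (E₀ : Finset (Finset V)) (hE₀ : E₀ ⊆ E)
    (hne : (unitOf E E₀).Nonempty)
    (U : Finset V) (hU : U ⊆ unitOf E E₀) (hcard : 2 ≤ U.card)
    (c : ℝ) (hc : ∀ v ∈ U, δV v = c)
    (c₀ : ℝ) (h0 : ∀ v ∈ U, x 0 v = c₀) :
    ∀ t : ℝ, 0 ≤ t → ∃ ct : ℝ, ∀ v ∈ U, x t v = ct := by
  obtain ⟨v₀, hv₀⟩ := Finset.card_pos.mp (by omega : 0 < U.card)
  have hc0 : 0 < c := hc v₀ hv₀ ▸ hδV v₀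
  have hcard0 : ∀ e ∈ E₀, (e.card : ℝ) ≠ 0 := fun e he => by
    have := hE e (hE₀ he)
    positivity
  set C : ℝ := ∑ e ∈ E₀, δE e / (c * e.card) with hCdef
  have hCpos : 0 ≤ C := Finset.sum_nonneg fun e he => by
    have h1 := hδE e (hE₀ he)
    have h2 : (0:ℝ) < e.card := by
      have := hE e (hE₀ he)
      have : (2:ℝ) ≤ e.card := by exact_mod_cast this
      linarith
    positivity
  have star_eq : ∀ u ∈ U, starOf E u = E₀ := fun u hu =>
    (Finset.mem_filter.mp (hU hu)).2
  set K : ℝ := Kg + ε * C * Kf with hKdef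
  intro t₀ ht₀
  refine ⟨x t₀ v₀, fun v hv => ?_⟩
  have key : ∀ t : ℝ, Lop E δV δE (fun u => f (x t u)) v
      - Lop E δV δE (fun u => f (x t u)) v₀
      = C * (f (x t v₀) - f (x t v)) := fun t =>
    Lop_diff E δV δE E₀ c (ne_of_gt hc0) hcard0 v v₀
      (star_eq v hv) (star_eq v₀ hv₀) (hc v hv) (hc v₀ hv₀) _
  have main := norm_le_gronwallBound_of_norm_deriv_right_le
    (f := fun s => x s v - x s v₀)
    (f' := fun s => (g (x s v) + ε * Lop E δV δE (fun u => f (x s u)) v)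
                  - (g (x s v₀) + ε * Lop E δV δE (fun u => f (x s u)) v₀))
    (δ := 0) (K := K) (ε := 0) (a := 0) (b := t₀)
    (fun t ht => (((hdyn v t ht.1).sub (hdyn v₀ t ht.1)).continuousAt).continuousWithinAt)
    (fun t ht => ((hdyn v t ht.1).sub (hdyn v₀ t ht.1)).hasDerivWithinAt)
    (by simp [h0 v hv, h0 v₀ hv₀])
    (fun t ht => ?_) t₀ (Set.right_mem_Icc.mpr ht₀)
  · have : ‖x t₀ v - x t₀ v₀‖ ≤ 0 := by
      simpa [gronwallBound_ε0] using main
    have := norm_nonneg (x t₀ v - x t₀ v₀)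
    have : ‖x t₀ v - x t₀ v₀‖ = 0 := le_antisymm ‹_› ‹_›
    have := norm_eq_zero.mp this
    linarith [sub_eq_zero.mp this]
  · -- the bound
    beta_reduce
    set a := x t v with ha
    set b := x t v₀ with hb
    have heq : (g a + ε * Lop E δV δE (fun u => f (x t u)) v)
        - (g b + ε * Lop E δV δE (fun u => f (x t u)) v₀)
        = (g a - g b) + ε * (C * (f b - f a)) := by
      rw [← key t]; ring
    rw [heq]
    have hgb : ‖g a - g b‖ ≤ (Kg : ℝ) * ‖a - b‖ := by
      have := hg.dist_le_mul a b
      rwa [Real.dist_eq, Real.dist_eq] at this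
    have hfb : ‖f b - f a‖ ≤ (Kf : ℝ) * ‖a - b‖ := by
      have := hf.dist_le_mul b a
      rw [Real.dist_eq, Real.dist_eq] at this
      simpa [abs_sub_comm] using this
    have h2 : ‖ε * (C * (f b - f a))‖ = ε * C * ‖f b - f a‖ := by
      rw [norm_mul, norm_mul, Real.norm_eq_abs, Real.norm_eq_abs,
        abs_of_pos hε.1, abs_of_nonneg hCpos]; ring
    calc ‖(g a - g b) + ε * (C * (f b - f a))‖
        ≤ ‖g a - g b‖ + ‖ε * (C * (f b - f a))‖ := norm_add_le _ _
      _ = ‖g a - g b‖ + ε * C * ‖f b - f a‖ := by rw [h2]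
      _ ≤ (Kg : ℝ) * ‖a - b‖ + ε * C * ((Kf : ℝ) * ‖a - b‖) :=
          add_le_add hgb (mul_le_mul_of_nonneg_left hfb
            (mul_nonneg hε.1.le hCpos))
      _ = K * ‖a - b‖ + 0 := by rw [hKdef]; ring
end

section
/- If W_{E_i} and W_{E_j} are twin units of H with W_{E_i} ≠ W_{E_j}, then their generating sets are disjoint: E_i ∩ E_j = ∅. -/
open Finset

/-- The generating sets of twin units are disjoint. -/
theorem twin_units_generating_disjoint {V : Type*} [Fintype V] [DecidableEq V]
    (E : Finset (Finset V)) (hE : ∀ e ∈ E, 2 ≤ e.card)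
    (Ei Ej : Finset (Finset V)) (hEi : Ei ⊆ E) (hEj : Ej ⊆ E)
    (hni : (unitOf E Ei).Nonempty) (hnj : (unitOf E Ej).Nonempty)
    (hWne : unitOf E Ei ≠ unitOf E Ej)
    (htwin₁ : ∀ e ∈ Ei, ∃ f ∈ Ej, e \ unitOf E Ei = f \ unitOf E Ej)
    (htwin₂ : ∀ f ∈ Ej, ∃ e ∈ Ei, f \ unitOf E Ej = e \ unitOf E Ei) :
    Ei ∩ Ej = ∅ := by
  by_contra h
  obtain ⟨e, he⟩ := Finset.nonempty_of_ne_empty h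
  rw [Finset.mem_inter] at he
  obtain ⟨hei, hej⟩ := he
  obtain ⟨vj, hvj⟩ := hnj
  have hstarj : starOf E vj = Ej := by
    simpa [unitOf] using hvj
  have hEine : Ei ≠ Ej := fun hEq => hWne (by rw [hEq])
  have hvje : vj ∈ e := by
    have : e ∈ starOf E vj := hstarj ▸ hej
    exact (Finset.mem_filter.mp this).2
  have hvjnotWi : vj ∉ unitOf E Ei := by
    intro hmem
    have : starOf E vj = Ei := by simpa [unitOf] using hmem
    exact hEine (this ▸ hstarj)
  obtain ⟨f, hf, heq⟩ := htwin₁ e hei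
  have : vj ∈ f \ unitOf E Ej := heq ▸ Finset.mem_sdiff.mpr ⟨hvje, hvjnotWi⟩
  exact (Finset.mem_sdiff.mp this).2 hvj
end

section
/- Let W_{E_i} and W_{E_j} be twin units of H with σ-preserving canonical bijection φ : E_i → E_j, and suppose δ_V(v) = c for all v ∈ W_{E_i} ∪ W_{E_j}. Then the function y = |W_{E_j}|·χ_{W_{E_i}} − |W_{E_i}|·χ_{W_{E_j}} is an eigenvector of L with eigenvalue −(1/c)·Σ_{e∈E_i} σ(e)·|e \ W_{E_i}|, where σ(e) = δ_E(e)/|e|². -/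
open Finset

/-- The function `σ(e) = δE e / |e|²`. -/
noncomputable def sigmaH {V : Type*} [DecidableEq V]
    (δE : Finset V → ℝ) (e : Finset V) : ℝ :=
  δE e / (e.card : ℝ) ^ 2

lemma mem_unitOf_iff' {V : Type*} [Fintype V] [DecidableEq V]
    (E E₀ : Finset (Finset V)) (v : V) :
    v ∈ unitOf E E₀ ↔ E.filter (fun e => v ∈ e) = E₀ := by
  rw [unitOf, Finset.mem_filter]
  simp [starOf]

lemma mem_edge_iff' {V : Type*} [Fintype V] [DecidableEq V]
    {E E₀ : Finset (Finset V)} {e : Finset V} {w : V}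
    (he : e ∈ E) (hw : w ∈ unitOf E E₀) : w ∈ e ↔ e ∈ E₀ := by
  rw [mem_unitOf_iff'] at hw
  rw [← hw, Finset.mem_filter]
  exact ⟨fun h => ⟨he, h⟩, fun h => h.2⟩

lemma sum_indicator_eq' {V : Type*} [DecidableEq V] (e W : Finset V) :
    (∑ u ∈ e, if u ∈ W then (1:ℝ) else 0) = ((e ∩ W).card : ℝ) := by
  rw [Finset.sum_boole, Finset.filter_mem_eq_inter]

lemma sum_y' {V : Type*} [DecidableEq V] (e Wi Wj : Finset V) (a b : ℝ) :
    (∑ u ∈ e, (a * (if u ∈ Wi then (1:ℝ) else 0) - b * (if u ∈ Wj then 1 else 0)))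
      = a * ((e ∩ Wi).card : ℝ) - b * ((e ∩ Wj).card : ℝ) := by
  rw [Finset.sum_sub_distrib, ← Finset.mul_sum, ← Finset.mul_sum,
    sum_indicator_eq', sum_indicator_eq']

/-- For twin units `W_{E_i}`, `W_{E_j}` with a σ-preserving canonical bijection
and constant vertex weight `c` on `W_{E_i} ∪ W_{E_j}`, the function
`y = |W_{E_j}|·χ_{W_{E_i}} - |W_{E_i}|·χ_{W_{E_j}}` is an eigenvector of the
diffusion operator with eigenvalue `-(1/c)·Σ_{e∈E_i} σ(e)·|e \ W_{E_i}|`. -/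
theorem twin_units_eigenvector {V : Type*} [Fintype V] [DecidableEq V]
    (E : Finset (Finset V)) (hE : ∀ e ∈ E, 2 ≤ e.card)
    (δV : V → ℝ) (hδV : ∀ v, 0 < δV v)
    (δE : Finset V → ℝ) (hδE : ∀ e ∈ E, 0 < δE e)
    (Ei Ej : Finset (Finset V)) (hEi : Ei ⊆ E) (hEj : Ej ⊆ E)
    (hni : (unitOf E Ei).Nonempty) (hnj : (unitOf E Ej).Nonempty)
    (hWne : unitOf E Ei ≠ unitOf E Ej)
    (φ : Finset V → Finset V) (hφ : Set.BijOn φ ↑Ei ↑Ej)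
    (htwin : ∀ e ∈ Ei, e \ unitOf E Ei = φ e \ unitOf E Ej)
    (hσ : ∀ e ∈ Ei, sigmaH δE (φ e) = sigmaH δE e)
    (c : ℝ) (hc : ∀ v ∈ unitOf E Ei ∪ unitOf E Ej, δV v = c) :
    ∀ v : V,
      Lop E δV δE
        (fun w => ((unitOf E Ej).card : ℝ) * (if w ∈ unitOf E Ei then 1 else 0)
          - ((unitOf E Ei).card : ℝ) * (if w ∈ unitOf E Ej then 1 else 0)) v
      = (-(1 / c) * ∑ e ∈ Ei, sigmaH δE e * ((e \ unitOf E Ei).card : ℝ))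
        * (((unitOf E Ej).card : ℝ) * (if v ∈ unitOf E Ei then 1 else 0)
          - ((unitOf E Ei).card : ℝ) * (if v ∈ unitOf E Ej then 1 else 0)) := by
  intro v
  classical
  -- basic facts about units
  have hdisj1 : ∀ w ∈ unitOf E Ei, w ∉ unitOf E Ej := by
    intro w hwi hwj
    rw [mem_unitOf_iff'] at hwi hwj
    exact hWne (by rw [hwi.symm.trans hwj])
  have hdisj2 : ∀ w ∈ unitOf E Ej, w ∉ unitOf E Ei := fun w hwj hwi => hdisj1 w hwi hwj
  have hsubi : ∀ e ∈ Ei, unitOf E Ei ⊆ e :=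
    fun e he w hw => (mem_edge_iff' (hEi he) hw).2 he
  have hsubj : ∀ f ∈ Ej, unitOf E Ej ⊆ f :=
    fun f hf w hw => (mem_edge_iff' (hEj hf) hw).2 hf
  have hEdisj : ∀ e ∈ Ei, e ∉ Ej := by
    intro e hei hej
    obtain ⟨u, hu⟩ := hnj
    have hu_e : u ∈ e := (mem_edge_iff' (hEj hej) hu).2 hej
    have hu_ni : u ∉ unitOf E Ei := fun h => hdisj1 u h hu
    have hmem : u ∈ e \ unitOf E Ei := Finset.mem_sdiff.2 ⟨hu_e, hu_ni⟩
    rw [htwin e hei] at hmem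
    exact (Finset.mem_sdiff.1 hmem).2 hu
  have hEdisj' : ∀ f ∈ Ej, f ∉ Ei := fun f hf h => hEdisj f h hf
  have hinterI : ∀ e ∈ Ei, e ∩ unitOf E Ei = unitOf E Ei :=
    fun e he => Finset.inter_eq_right.2 (hsubi e he)
  have hinterJ : ∀ f ∈ Ej, f ∩ unitOf E Ej = unitOf E Ej :=
    fun f hf => Finset.inter_eq_right.2 (hsubj f hf)
  have hinterIJ : ∀ e ∈ Ei, e ∩ unitOf E Ej = ∅ := by
    intro e he
    rw [Finset.eq_empty_iff_forall_notMem]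
    intro u hu
    rw [Finset.mem_inter] at hu
    exact hEdisj e he ((mem_edge_iff' (hEi he) hu.2).1 hu.1)
  have hinterJI : ∀ f ∈ Ej, f ∩ unitOf E Ei = ∅ := by
    intro f hf
    rw [Finset.eq_empty_iff_forall_notMem]
    intro u hu
    rw [Finset.mem_inter] at hu
    exact hEdisj' f hf ((mem_edge_iff' (hEj hf) hu.2).1 hu.1)
  by_cases hvi : v ∈ unitOf E Ei
  · -- v in W_{E_i}
    have hvj : v ∉ unitOf E Ej := hdisj1 v hvi
    have hδv : δV v = c := hc v (Finset.mem_union_left _ hvi)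
    have hfilter : E.filter (fun e => v ∈ e) = Ei := (mem_unitOf_iff' E Ei v).1 hvi
    simp only [Lop, hfilter, hvi, hvj, if_true, if_false, mul_one, mul_zero, sub_zero]
    rw [Finset.mul_sum, Finset.sum_mul]
    apply Finset.sum_congr rfl
    intro e he
    have hcard : ((e \ unitOf E Ei).card : ℝ)
        = (e.card : ℝ) - ((unitOf E Ei).card : ℝ) := by
      rw [Finset.card_sdiff_of_subset (hsubi e he), Nat.cast_sub (Finset.card_le_card (hsubi e he))]
    rw [Finset.sum_sub_distrib, sum_y', hinterI e he, hinterIJ e he, Finset.sum_const,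
      nsmul_eq_mul, hcard, hδv]
    simp only [sigmaH, Finset.card_empty, Nat.cast_zero]
    ring
  by_cases hvj : v ∈ unitOf E Ej
  · -- v in W_{E_j}
    have hδv : δV v = c := hc v (Finset.mem_union_right _ hvj)
    have hfilter : E.filter (fun e => v ∈ e) = Ej := (mem_unitOf_iff' E Ej v).1 hvj
    simp only [Lop, hfilter, hvi, hvj, if_true, if_false, mul_one, mul_zero, zero_sub]
    rw [Finset.mul_sum, Finset.sum_mul]
    refine (Finset.sum_bij (fun e _ => φ e) ?_ ?_ ?_ ?_).symm
    · intro e he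
      exact Finset.mem_coe.1 (hφ.mapsTo (Finset.mem_coe.2 he))
    · intro a₁ h₁ a₂ h₂ h
      exact hφ.injOn (Finset.mem_coe.2 h₁) (Finset.mem_coe.2 h₂) h
    · intro f hf
      obtain ⟨e, he, hfe⟩ := hφ.surjOn (Finset.mem_coe.2 hf)
      exact ⟨e, Finset.mem_coe.1 he, hfe⟩
    · intro e he
      have hfj : φ e ∈ Ej := Finset.mem_coe.1 (hφ.mapsTo (Finset.mem_coe.2 he))
      have hcard : ((e \ unitOf E Ei).card : ℝ)
          = ((φ e).card : ℝ) - ((unitOf E Ej).card : ℝ) := by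
        rw [htwin e he, Finset.card_sdiff_of_subset (hsubj _ hfj),
          Nat.cast_sub (Finset.card_le_card (hsubj _ hfj))]
      rw [← hσ e he, Finset.sum_sub_distrib, sum_y', hinterJ _ hfj, hinterJI _ hfj,
        Finset.sum_const, nsmul_eq_mul, hcard, hδv]
      simp only [sigmaH, Finset.card_empty, Nat.cast_zero]
      ring
  · -- v outside both units
    have hy0 : (((unitOf E Ej).card : ℝ) * (if v ∈ unitOf E Ei then 1 else 0)
        - ((unitOf E Ei).card : ℝ) * (if v ∈ unitOf E Ej then 1 else 0)) = 0 := by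
      simp [hvi, hvj]
    simp only [Lop, hvi, hvj, if_false, mul_zero, sub_zero, hy0]
    have hterm : ∀ e ∈ E.filter (fun e => v ∈ e),
        (δE e / δV v) * (1 / (e.card : ℝ) ^ 2) *
          ∑ u ∈ e, ((((unitOf E Ej).card : ℝ) * (if u ∈ unitOf E Ei then 1 else 0)
            - ((unitOf E Ei).card : ℝ) * (if u ∈ unitOf E Ej then 1 else 0)))
        = (((unitOf E Ej).card : ℝ) * ((unitOf E Ei).card : ℝ) / δV v) *
            ((if e ∈ Ei then sigmaH δE e else 0) - (if e ∈ Ej then sigmaH δE e else 0)) := by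
      intro e he
      rw [Finset.mem_filter] at he
      rw [sum_y']
      by_cases h1 : e ∈ Ei
      · have h2 : e ∉ Ej := hEdisj e h1
        rw [hinterI e h1, hinterIJ e h1, if_pos h1, if_neg h2]
        simp only [sigmaH, Finset.card_empty, Nat.cast_zero]
        ring
      by_cases h2 : e ∈ Ej
      · rw [hinterJ e h2, hinterJI e h2, if_neg h1, if_pos h2]
        simp only [sigmaH, Finset.card_empty, Nat.cast_zero]
        ring
      · have h3 : e ∩ unitOf E Ei = ∅ := by
          rw [Finset.eq_empty_iff_forall_notMem]
          intro u hu
          rw [Finset.mem_inter] at hu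
          exact h1 ((mem_edge_iff' he.1 hu.2).1 hu.1)
        have h4 : e ∩ unitOf E Ej = ∅ := by
          rw [Finset.eq_empty_iff_forall_notMem]
          intro u hu
          rw [Finset.mem_inter] at hu
          exact h2 ((mem_edge_iff' he.1 hu.2).1 hu.1)
        rw [h3, h4, if_neg h1, if_neg h2]
        simp only [Finset.card_empty, Nat.cast_zero]
        ring
    rw [Finset.sum_congr rfl hterm, ← Finset.mul_sum, Finset.sum_sub_distrib,
      ← Finset.sum_filter, ← Finset.sum_filter]
    have hfi : (E.filter (fun e => v ∈ e)).filter (fun e => e ∈ Ei)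
        = Ei.filter (fun e => v ∈ e) := by
      ext e
      simp only [Finset.mem_filter]
      exact ⟨fun h => ⟨h.2, h.1.2⟩, fun h => ⟨⟨hEi h.1, h.2⟩, h.1⟩⟩
    have hfj : (E.filter (fun e => v ∈ e)).filter (fun e => e ∈ Ej)
        = Ej.filter (fun e => v ∈ e) := by
      ext e
      simp only [Finset.mem_filter]
      exact ⟨fun h => ⟨h.2, h.1.2⟩, fun h => ⟨⟨hEj h.1, h.2⟩, h.1⟩⟩
    rw [hfi, hfj]
    have hbij : ∑ e ∈ Ei.filter (fun e => v ∈ e), sigmaH δE e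
        = ∑ f ∈ Ej.filter (fun f => v ∈ f), sigmaH δE f := by
      refine Finset.sum_bij (fun e _ => φ e) ?_ ?_ ?_ ?_
      · intro e he
        rw [Finset.mem_filter] at he ⊢
        refine ⟨Finset.mem_coe.1 (hφ.mapsTo (Finset.mem_coe.2 he.1)), ?_⟩
        have : v ∈ e \ unitOf E Ei := Finset.mem_sdiff.2 ⟨he.2, hvi⟩
        rw [htwin e he.1] at this
        exact (Finset.mem_sdiff.1 this).1
      · intro a₁ h₁ a₂ h₂ h
        rw [Finset.mem_filter] at h₁ h₂
        exact hφ.injOn (Finset.mem_coe.2 h₁.1) (Finset.mem_coe.2 h₂.1) h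
      · intro f hf
        rw [Finset.mem_filter] at hf
        obtain ⟨e, he, hfe⟩ := hφ.surjOn (Finset.mem_coe.2 hf.1)
        have he' : e ∈ Ei := Finset.mem_coe.1 he
        refine ⟨e, ?_, hfe⟩
        rw [Finset.mem_filter]
        refine ⟨he', ?_⟩
        have : v ∈ φ e \ unitOf E Ej := by
          rw [hfe]
          exact Finset.mem_sdiff.2 ⟨hf.2, hvj⟩
        rw [← htwin e he'] at this
        exact (Finset.mem_sdiff.1 this).1
      · intro e he
        rw [Finset.mem_filter] at he
        exact (hσ e he.1).symm
    rw [hbij, sub_self, mul_zero]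
end

section
/- Let W_{E_i} and W_{E_j} be twin units of H with σ-preserving canonical bijection φ : E_i → E_j, and suppose δ_V(v) = c for all v ∈ W_{E_i} ∪ W_{E_j}. Then the subspace T_{W_{E_i}} + T_{W_{E_j}} + span{|W_{E_j}|·χ_{W_{E_i}} − |W_{E_i}|·χ_{W_{E_j}}} of ℝ^V is an invariant subspace of the general diffusion operator L. -/
open Finset

/-- For twin units `W_{E_i}`, `W_{E_j}` with a σ-preserving canonical bijection
and constant vertex weight on the union, the subspace
`T_{W_{E_i}} + T_{W_{E_j}} + span{|W_{E_j}|·χ_{W_{E_i}} - |W_{E_i}|·χ_{W_{E_j}}}`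
is invariant under the diffusion operator. -/
theorem twin_units_invariant_subspace {V : Type*} [Fintype V] [DecidableEq V]
    (E : Finset (Finset V)) (hE : ∀ e ∈ E, 2 ≤ e.card)
    (δV : V → ℝ) (hδV : ∀ v, 0 < δV v)
    (δE : Finset V → ℝ) (hδE : ∀ e ∈ E, 0 < δE e)
    (Ei Ej : Finset (Finset V)) (hEi : Ei ⊆ E) (hEj : Ej ⊆ E)
    (hni : (unitOf E Ei).Nonempty) (hnj : (unitOf E Ej).Nonempty)
    (hWne : unitOf E Ei ≠ unitOf E Ej)
    (φ : Finset V → Finset V) (hφ : Set.BijOn φ ↑Ei ↑Ej)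
    (htwin : ∀ e ∈ Ei, e \ unitOf E Ei = φ e \ unitOf E Ej)
    (hσ : ∀ e ∈ Ei, sigmaH δE (φ e) = sigmaH δE e)
    (c : ℝ) (hc : ∀ v ∈ unitOf E Ei ∪ unitOf E Ej, δV v = c)
    (x : V → ℝ)
    (hx : ∃ (x₁ x₂ : V → ℝ) (r : ℝ), memT (unitOf E Ei) x₁ ∧
      memT (unitOf E Ej) x₂ ∧
      x = x₁ + x₂ + r • (fun w =>
        ((unitOf E Ej).card : ℝ) * (if w ∈ unitOf E Ei then 1 else 0)
          - ((unitOf E Ei).card : ℝ) * (if w ∈ unitOf E Ej then 1 else 0))) :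
    ∃ (z₁ z₂ : V → ℝ) (r : ℝ), memT (unitOf E Ei) z₁ ∧
      memT (unitOf E Ej) z₂ ∧
      Lop E δV δE x = z₁ + z₂ + r • (fun w =>
        ((unitOf E Ej).card : ℝ) * (if w ∈ unitOf E Ei then 1 else 0)
          - ((unitOf E Ei).card : ℝ) * (if w ∈ unitOf E Ej then 1 else 0)) := by
    classical
  obtain ⟨x₁, x₂, r, hx1, hx2, hxeq⟩ := hx
  set Wi := unitOf E Ei with hWidef
  set Wj := unitOf E Ej with hWjdef
  set mi : ℝ := (Wi.card : ℝ) with hmi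
  set mj : ℝ := (Wj.card : ℝ) with hmj
  have hstar_i : ∀ v ∈ Wi, E.filter (fun e => v ∈ e) = Ei := by
    intro v hv
    exact (Finset.mem_filter.mp hv).2
  have hstar_j : ∀ v ∈ Wj, E.filter (fun e => v ∈ e) = Ej := by
    intro v hv
    exact (Finset.mem_filter.mp hv).2
  have hmem_i : ∀ v ∈ Wi, ∀ e ∈ E, (v ∈ e ↔ e ∈ Ei) := by
    intro v hv e he
    constructor
    · intro h; rw [← hstar_i v hv]; exact Finset.mem_filter.mpr ⟨he, h⟩
    · intro h; rw [← hstar_i v hv] at h; exact (Finset.mem_filter.mp h).2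
  have hmem_j : ∀ v ∈ Wj, ∀ e ∈ E, (v ∈ e ↔ e ∈ Ej) := by
    intro v hv e he
    constructor
    · intro h; rw [← hstar_j v hv]; exact Finset.mem_filter.mpr ⟨he, h⟩
    · intro h; rw [← hstar_j v hv] at h; exact (Finset.mem_filter.mp h).2
  have hdisj : ∀ v, v ∈ Wi → v ∉ Wj := by
    intro v hvi hvj
    apply hWne
    have h1 : starOf E v = Ei := (Finset.mem_filter.mp hvi).2
    have h2 : starOf E v = Ej := (Finset.mem_filter.mp hvj).2
    have hEq : Ei = Ej := h1 ▸ h2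
    rw [hWidef, hWjdef, hEq]
  have hEi_not_Ej : ∀ e ∈ Ei, e ∉ Ej := by
    obtain ⟨w, hw⟩ := hnj
    intro e hei hej
    have hwe : w ∈ e := (hmem_j w hw e (hEi hei)).mpr hej
    have hwWi : w ∉ Wi := fun h => hdisj w h hw
    have h1 : w ∈ e \ Wi := Finset.mem_sdiff.mpr ⟨hwe, hwWi⟩
    rw [htwin e hei] at h1
    exact (Finset.mem_sdiff.mp h1).2 hw
  have hEj_not_Ei : ∀ e ∈ Ej, e ∉ Ei := fun e hej hei => hEi_not_Ej e hei hej
  have sum_phi : ∀ f : Finset V → ℝ, ∑ e ∈ Ej, f e = ∑ e ∈ Ei, f (φ e) := by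
    intro f
    refine (Finset.sum_bij (fun e _ => φ e) ?_ ?_ ?_ ?_).symm
    · intro a ha; exact hφ.mapsTo ha
    · intro a ha b hb h; exact hφ.injOn ha hb h
    · intro b hb
      obtain ⟨a, ha, rfl⟩ := hφ.surjOn hb
      exact ⟨a, ha, rfl⟩
    · intro a ha; rfl
  have hsub_i : ∀ e ∈ Ei, Wi ⊆ e := by
    intro e he w hw; exact (hmem_i w hw e (hEi he)).mpr he
  have hsub_j : ∀ e ∈ Ej, Wj ⊆ e := by
    intro e he w hw; exact (hmem_j w hw e (hEj he)).mpr he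
  -- filters of units inside edges
  have hfilter_i : ∀ e ∈ E, e.filter (fun u => u ∈ Wi) = if e ∈ Ei then Wi else ∅ := by
    intro e he
    split_ifs with h
    · ext w
      simp only [Finset.mem_filter]
      exact ⟨fun hh => hh.2, fun hw => ⟨(hmem_i w hw e he).mpr h, hw⟩⟩
    · ext w
      simp only [Finset.mem_filter, Finset.notMem_empty, iff_false, not_and]
      intro hwe hw
      exact h ((hmem_i w hw e he).mp hwe)
  have hfilter_j : ∀ e ∈ E, e.filter (fun u => u ∈ Wj) = if e ∈ Ej then Wj else ∅ := by
    intro e he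
    split_ifs with h
    · ext w
      simp only [Finset.mem_filter]
      exact ⟨fun hh => hh.2, fun hw => ⟨(hmem_j w hw e he).mpr h, hw⟩⟩
    · ext w
      simp only [Finset.mem_filter, Finset.notMem_empty, iff_false, not_and]
      intro hwe hw
      exact h ((hmem_j w hw e he).mp hwe)
  have hsum_x1 : ∀ e ∈ E, ∑ u ∈ e, x₁ u = 0 := by
    intro e he
    have h1 : ∑ u ∈ e.filter (fun u => u ∈ Wi), x₁ u = ∑ u ∈ e, x₁ u :=
      Finset.sum_filter_of_ne (fun u _ hne => by
        by_contra h; exact hne (hx1.1 u h))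
    rw [← h1, hfilter_i e he]
    split_ifs
    · exact hx1.2
    · simp
  have hsum_x2 : ∀ e ∈ E, ∑ u ∈ e, x₂ u = 0 := by
    intro e he
    have h1 : ∑ u ∈ e.filter (fun u => u ∈ Wj), x₂ u = ∑ u ∈ e, x₂ u :=
      Finset.sum_filter_of_ne (fun u _ hne => by
        by_contra h; exact hne (hx2.1 u h))
    rw [← h1, hfilter_j e he]
    split_ifs
    · exact hx2.2
    · simp
  have hchi_i : ∀ e ∈ E, ∑ u ∈ e, (if u ∈ Wi then (1:ℝ) else 0) = if e ∈ Ei then mi else 0 := by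
    intro e he
    rw [← Finset.sum_filter, hfilter_i e he]
    split_ifs <;> simp [hmi]
  have hchi_j : ∀ e ∈ E, ∑ u ∈ e, (if u ∈ Wj then (1:ℝ) else 0) = if e ∈ Ej then mj else 0 := by
    intro e he
    rw [← Finset.sum_filter, hfilter_j e he]
    split_ifs <;> simp [hmj]
  have hsum_x : ∀ e ∈ E, ∑ u ∈ e, x u
      = r * (mi * mj) * ((if e ∈ Ei then (1:ℝ) else 0) - (if e ∈ Ej then 1 else 0)) := by
    intro e he
    rw [hxeq]
    simp only [Pi.add_apply, Pi.smul_apply, smul_eq_mul]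
    rw [Finset.sum_add_distrib, Finset.sum_add_distrib, hsum_x1 e he, hsum_x2 e he,
      ← Finset.mul_sum, Finset.sum_sub_distrib, ← Finset.mul_sum, ← Finset.mul_sum,
      hchi_i e he, hchi_j e he]
    split_ifs <;> ring
  set s : ℝ := ∑ e ∈ Ei, sigmaH δE e with hs
  set Si : ℝ := ∑ e ∈ Ei, sigmaH δE e * e.card with hSi
  set Sj : ℝ := ∑ e ∈ Ej, sigmaH δE e * e.card with hSj
  have hs_j : ∑ e ∈ Ej, sigmaH δE e = s := by
    rw [hs, sum_phi (fun e => sigmaH δE e)]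
    exact Finset.sum_congr rfl fun e he => hσ e he
  have hcardφ : ∀ e ∈ Ei, ((φ e).card : ℝ) = (e.card : ℝ) - mi + mj := by
    intro e he
    have hφe : φ e ∈ Ej := hφ.mapsTo he
    have h1 : Wi ⊆ e := hsub_i e he
    have h2 : Wj ⊆ φ e := hsub_j (φ e) hφe
    have h3 := Finset.card_sdiff_add_card_eq_card h1
    have h4 := Finset.card_sdiff_add_card_eq_card h2
    rw [← htwin e he] at h4
    have h3' : ((e \ Wi).card : ℝ) + Wi.card = e.card := by exact_mod_cast h3
    have h4' : ((e \ Wi).card : ℝ) + Wj.card = (φ e).card := by exact_mod_cast h4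
    rw [hmi, hmj]; linarith
  have hSji : Sj = Si + (mj - mi) * s := by
    rw [hSj, sum_phi (fun e => sigmaH δE e * e.card)]
    have : ∀ e ∈ Ei, sigmaH δE (φ e) * ((φ e).card : ℝ)
        = sigmaH δE e * (e.card : ℝ) + sigmaH δE e * (mj - mi) := by
      intro e he
      rw [hσ e he, hcardφ e he]; ring
    rw [Finset.sum_congr rfl this, Finset.sum_add_distrib, ← Finset.sum_mul, hSi, hs]
    ring
  -- the witnesses
  refine ⟨fun v => -(Si / c) * x₁ v, fun v => -(Sj / c) * x₂ v, (r / c) * (mi * s - Si),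
    ⟨fun v hv => by simp [hx1.1 v hv], by rw [← Finset.mul_sum, hx1.2, mul_zero]⟩,
    ⟨fun v hv => by simp [hx2.1 v hv], by rw [← Finset.mul_sum, hx2.2, mul_zero]⟩, ?_⟩
  funext v
  simp only [Pi.add_apply, Pi.smul_apply, smul_eq_mul]
  by_cases hvi : v ∈ Wi
  · have hvj : v ∉ Wj := hdisj v hvi
    have hδ : δV v = c := hc v (Finset.mem_union_left _ hvi)
    have hxv : x v = x₁ v + r * mj := by
      rw [hxeq]
      simp only [Pi.add_apply, Pi.smul_apply, smul_eq_mul, hx2.1 v hvj, if_pos hvi,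
        if_neg hvj]
      ring
    have key : ∀ e ∈ Ei, (δE e / δV v) * (1 / (e.card : ℝ) ^ 2) * (∑ u ∈ e, (x u - x v))
        = sigmaH δE e * ((r * (mi * mj)) / c) - (sigmaH δE e * e.card) * ((x₁ v + r * mj) / c) := by
      intro e he
      have heE : e ∈ E := hEi he
      have h1 : ∑ u ∈ e, (x u - x v) = r * (mi * mj) - (e.card : ℝ) * x v := by
        rw [Finset.sum_sub_distrib, Finset.sum_const, nsmul_eq_mul, hsum_x e heE,
          if_pos he, if_neg (hEi_not_Ej e he)]
        ring
      rw [h1, hxv, hδ, sigmaH]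
      ring
    rw [show Lop E δV δE x v = ∑ e ∈ Ei, (δE e / δV v) * (1 / (e.card : ℝ) ^ 2)
        * (∑ u ∈ e, (x u - x v)) by rw [Lop, hstar_i v hvi],
      Finset.sum_congr rfl key, Finset.sum_sub_distrib, ← Finset.sum_mul, ← Finset.sum_mul,
      ← hs, ← hSi, if_pos hvi, if_neg hvj, hx2.1 v hvj]
    ring
  by_cases hvj : v ∈ Wj
  · have hδ : δV v = c := hc v (Finset.mem_union_right _ hvj)
    have hxv : x v = x₂ v - r * mi := by
      rw [hxeq]
      simp only [Pi.add_apply, Pi.smul_apply, smul_eq_mul, hx1.1 v hvi, if_pos hvj,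
        if_neg hvi]
      ring
    have key : ∀ e ∈ Ej, (δE e / δV v) * (1 / (e.card : ℝ) ^ 2) * (∑ u ∈ e, (x u - x v))
        = sigmaH δE e * (-(r * (mi * mj)) / c) - (sigmaH δE e * e.card) * ((x₂ v - r * mi) / c) := by
      intro e he
      have heE : e ∈ E := hEj he
      have h1 : ∑ u ∈ e, (x u - x v) = -(r * (mi * mj)) - (e.card : ℝ) * x v := by
        rw [Finset.sum_sub_distrib, Finset.sum_const, nsmul_eq_mul, hsum_x e heE,
          if_pos he, if_neg (hEj_not_Ei e he)]
        ring
      rw [h1, hxv, hδ, sigmaH]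
      ring
    rw [show Lop E δV δE x v = ∑ e ∈ Ej, (δE e / δV v) * (1 / (e.card : ℝ) ^ 2)
        * (∑ u ∈ e, (x u - x v)) by rw [Lop, hstar_j v hvj],
      Finset.sum_congr rfl key, Finset.sum_sub_distrib, ← Finset.sum_mul, ← Finset.sum_mul,
      hs_j, ← hSj, if_pos hvj, if_neg hvi, hSji, hx1.1 v hvi]
    ring
  · -- v outside both units
    have hxv : x v = 0 := by
      rw [hxeq]
      simp [hx1.1 v hvi, hx2.1 v hvj, hvi, hvj]
    have hx1v : x₁ v = 0 := hx1.1 v hvi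
    have hx2v : x₂ v = 0 := hx2.1 v hvj
    have hviff : ∀ e ∈ Ei, (v ∈ φ e ↔ v ∈ e) := by
      intro e he
      have ht := htwin e he
      constructor
      · intro h
        have h1 : v ∈ φ e \ Wj := Finset.mem_sdiff.mpr ⟨h, hvj⟩
        rw [← ht] at h1
        exact (Finset.mem_sdiff.mp h1).1
      · intro h
        have h1 : v ∈ e \ Wi := Finset.mem_sdiff.mpr ⟨h, hvi⟩
        rw [ht] at h1
        exact (Finset.mem_sdiff.mp h1).1
    have hEfi : (E.filter (fun e => v ∈ e)).filter (fun e => e ∈ Ei)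
        = Ei.filter (fun e => v ∈ e) := by
      ext e
      simp only [Finset.mem_filter]
      exact ⟨fun h => ⟨h.2, h.1.2⟩, fun h => ⟨⟨hEi h.1, h.2⟩, h.1⟩⟩
    have hEfj : (E.filter (fun e => v ∈ e)).filter (fun e => e ∈ Ej)
        = Ej.filter (fun e => v ∈ e) := by
      ext e
      simp only [Finset.mem_filter]
      exact ⟨fun h => ⟨h.2, h.1.2⟩, fun h => ⟨⟨hEj h.1, h.2⟩, h.1⟩⟩
    have hAij : ∑ e ∈ Ej, (if v ∈ e then sigmaH δE e else 0)
        = ∑ e ∈ Ei, (if v ∈ e then sigmaH δE e else 0) := by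
      rw [sum_phi (fun e => if v ∈ e then sigmaH δE e else 0)]
      refine Finset.sum_congr rfl fun e he => ?_
      simp only [hσ e he, hviff e he]
    have key : ∀ e ∈ E.filter (fun e => v ∈ e),
        (δE e / δV v) * (1 / (e.card : ℝ) ^ 2) * (∑ u ∈ e, (x u - x v))
        = ((if e ∈ Ei then sigmaH δE e else 0) - (if e ∈ Ej then sigmaH δE e else 0))
          * (r * (mi * mj) / δV v) := by
      intro e he
      have heE : e ∈ E := (Finset.mem_filter.mp he).1
      have h1 : ∑ u ∈ e, (x u - x v) = r * (mi * mj)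
          * ((if e ∈ Ei then (1:ℝ) else 0) - (if e ∈ Ej then 1 else 0)) := by
        rw [Finset.sum_sub_distrib, Finset.sum_const, nsmul_eq_mul, hsum_x e heE, hxv]
        ring
      rw [h1, sigmaH]
      split_ifs <;> ring
    rw [show Lop E δV δE x v = ∑ e ∈ E.filter (fun e => v ∈ e),
        (δE e / δV v) * (1 / (e.card : ℝ) ^ 2) * (∑ u ∈ e, (x u - x v)) from rfl,
      Finset.sum_congr rfl key, ← Finset.sum_mul, Finset.sum_sub_distrib,
      ← Finset.sum_filter, ← Finset.sum_filter, hEfi, hEfj,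
      Finset.sum_filter, Finset.sum_filter, hAij]
    simp [hx1v, hx2v, hvi, hvj]
end

section
/- Let {x_t} be a discrete dynamical network on H, let W_{E_i} and W_{E_j} be twin units of H with σ-preserving canonical bijection, and suppose δ_V(v) = c for all v ∈ W_{E_i} ∪ W_{E_j}. If there exist s ∈ ℕ and a constant c_s with x_s(v) = c_s for all v ∈ W_{E_i} ∪ W_{E_j}, then for every t ≥ s there is a constant c_t with x_t(v) = c_t for all v ∈ W_{E_i} ∪ W_{E_j}. -/
open Finset

open Finset

lemma Lop_const_on_unit {V : Type*} [Fintype V] [DecidableEq V]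
    (E : Finset (Finset V)) (δV : V → ℝ) (δE : Finset V → ℝ)
    (E₀ : Finset (Finset V)) (v : V) (hv : v ∈ unitOf E E₀)
    (W : Finset V) (hW : unitOf E E₀ ⊆ W)
    (y : V → ℝ) (a : ℝ) (hy : ∀ u ∈ W, y u = a) :
    Lop E δV δE y v
      = (1 / δV v) * ∑ e ∈ E₀, sigmaH δE e * ∑ u ∈ e \ W, (y u - a) := by
  have hstar : E.filter (fun e => v ∈ e) = E₀ := by
    have := (Finset.mem_filter.mp hv).2
    simpa [starOf] using this
  have hva : y v = a := hy v (hW hv)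
  rw [Lop, hstar, Finset.mul_sum]
  refine Finset.sum_congr rfl fun e he => ?_
  have hsum : ∑ u ∈ e \ W, (y u - a) = ∑ u ∈ e, (y u - a) := by
    refine Finset.sum_subset (Finset.sdiff_subset) fun u hu hnu => ?_
    have huW : u ∈ W := by
      by_contra h
      exact hnu (Finset.mem_sdiff.mpr ⟨hu, h⟩)
    simp [hy u huW]
  rw [hsum, hva, sigmaH]
  ring

/-- The union of two twin units with a σ-preserving canonical bijection and
constant vertex weight on the union is a synchronization-preserving cluster
for any discrete dynamical network. -/
theorem twin_units_sync_preserving {V : Type*} [Fintype V] [DecidableEq V]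
    (E : Finset (Finset V)) (hE : ∀ e ∈ E, 2 ≤ e.card)
    (δV : V → ℝ) (hδV : ∀ v, 0 < δV v)
    (δE : Finset V → ℝ) (hδE : ∀ e ∈ E, 0 < δE e)
    (f g : ℝ → ℝ) (ε : ℝ) (hε : ε ∈ Set.Ioo (0 : ℝ) 1)
    (x : ℕ → V → ℝ)
    (hdyn : ∀ t v, x (t + 1) v
      = g (x t v) + ε * Lop E δV δE (fun u => f (x t u)) v)
    (Ei Ej : Finset (Finset V)) (hEi : Ei ⊆ E) (hEj : Ej ⊆ E)
    (hni : (unitOf E Ei).Nonempty) (hnj : (unitOf E Ej).Nonempty)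
    (hWne : unitOf E Ei ≠ unitOf E Ej)
    (φ : Finset V → Finset V) (hφ : Set.BijOn φ ↑Ei ↑Ej)
    (htwin : ∀ e ∈ Ei, e \ unitOf E Ei = φ e \ unitOf E Ej)
    (hσ : ∀ e ∈ Ei, sigmaH δE (φ e) = sigmaH δE e)
    (c : ℝ) (hc : ∀ v ∈ unitOf E Ei ∪ unitOf E Ej, δV v = c)
    (s : ℕ) (cs : ℝ) (hs : ∀ v ∈ unitOf E Ei ∪ unitOf E Ej, x s v = cs) :
    ∀ t ≥ s, ∃ ct : ℝ, ∀ v ∈ unitOf E Ei ∪ unitOf E Ej, x t v = ct := by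
  set W : Finset V := unitOf E Ei ∪ unitOf E Ej with hWdef
  -- key lemma: if y is constant a on W, then Lop y is constant on W
  have key : ∀ (y : V → ℝ) (a : ℝ), (∀ u ∈ W, y u = a) →
      ∀ v ∈ W, Lop E δV δE y v
        = (1 / c) * ∑ e ∈ Ei, sigmaH δE e * ∑ u ∈ e \ W, (y u - a) := by
    intro y a hy v hv
    have hsdiff : ∀ e ∈ Ei, e \ W = φ e \ W := by
      intro e he
      have h1 := Finset.ext_iff.mp (htwin e he)
      ext u
      have := h1 u
      simp only [Finset.mem_sdiff, hWdef, Finset.mem_union] at *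
      tauto
    rcases Finset.mem_union.mp hv with hvi | hvj
    · rw [Lop_const_on_unit E δV δE Ei v hvi W Finset.subset_union_left y a hy,
        hc v hv]
    · rw [Lop_const_on_unit E δV δE Ej v hvj W Finset.subset_union_right y a hy,
        hc v hv]
      congr 1
      refine (Finset.sum_nbij φ (fun e he => hφ.mapsTo he) hφ.injOn hφ.surjOn
        fun e he => ?_).symm
      rw [hσ e he, hsdiff e he]
  -- induction
  intro t ht
  obtain ⟨k, rfl⟩ := Nat.exists_eq_add_of_le ht
  clear ht
  induction k with
  | zero => exact ⟨cs, hs⟩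
  | succ k ih =>
    obtain ⟨ct, hct⟩ := ih
    obtain ⟨v0, hv0⟩ := hni
    have hv0W : v0 ∈ W := Finset.mem_union_left _ hv0
    have hy : ∀ u ∈ W, f (x (s + k) u) = f ct := fun u hu => by rw [hct u hu]
    refine ⟨g ct + ε * Lop E δV δE (fun u => f (x (s + k) u)) v0, fun v hv => ?_⟩
    have h1 := key (fun u => f (x (s + k) u)) (f ct) hy v hv
    have h2 := key (fun u => f (x (s + k) u)) (f ct) hy v0 hv0W
    rw [show s + (k + 1) = (s + k) + 1 from rfl, hdyn, hct v hv, h1, ← h2]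
end

section
/- Let {x_t} be a discrete dynamical network on H and let a be a collection of units of H that are pairwise twin units with σ-preserving canonical bijections, such that δ_V(v) = c for all v ∈ ⋃_{W∈a} W. If there exist s ∈ ℕ and a constant c_s with x_s(v) = c_s for all v ∈ ⋃_{W∈a} W, then for every t ≥ s there is a constant c_t with x_t(v) = c_t for all v ∈ ⋃_{W∈a} W. -/
open Finset

/-- The union of a collection of units that are pairwise twin units with
σ-preserving canonical bijections (and constant vertex weight on the union)
is a synchronization-preserving cluster for any discrete dynamical network. -/
theorem twin_units_collection_sync_preserving
    {V : Type*} [Fintype V] [DecidableEq V]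
    (E : Finset (Finset V)) (hE : ∀ e ∈ E, 2 ≤ e.card)
    (δV : V → ℝ) (hδV : ∀ v, 0 < δV v)
    (δE : Finset V → ℝ) (hδE : ∀ e ∈ E, 0 < δE e)
    (f g : ℝ → ℝ) (ε : ℝ) (hε : ε ∈ Set.Ioo (0 : ℝ) 1)
    (x : ℕ → V → ℝ)
    (hdyn : ∀ t v, x (t + 1) v
      = g (x t v) + ε * Lop E δV δE (fun u => f (x t u)) v)
    (A : Finset (Finset (Finset V)))
    (hA : ∀ E₀ ∈ A, E₀ ⊆ E ∧ (unitOf E E₀).Nonempty)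
    (hpairtwin : ∀ Ei ∈ A, ∀ Ej ∈ A, Ei ≠ Ej →
      unitOf E Ei ≠ unitOf E Ej ∧
      ∃ φ : Finset V → Finset V, Set.BijOn φ ↑Ei ↑Ej ∧
        (∀ e ∈ Ei, e \ unitOf E Ei = φ e \ unitOf E Ej) ∧
        (∀ e ∈ Ei, sigmaH δE (φ e) = sigmaH δE e))
    (c : ℝ) (hc : ∀ v ∈ A.biUnion (fun E₀ => unitOf E E₀), δV v = c)
    (s : ℕ) (cs : ℝ)
    (hs : ∀ v ∈ A.biUnion (fun E₀ => unitOf E E₀), x s v = cs) :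
    ∀ t ≥ s, ∃ ct : ℝ, ∀ v ∈ A.biUnion (fun E₀ => unitOf E E₀), x t v = ct := by
  classical
  set U := A.biUnion (fun E₀ => unitOf E E₀) with hU
  -- Key: if y is constant d on U, then Lop y is constant on U.
  have key : ∀ (y : V → ℝ) (d : ℝ), (∀ v ∈ U, y v = d) →
      ∀ v ∈ U, ∀ v' ∈ U, Lop E δV δE y v = Lop E δV δE y v' := by
    intro y d hy v hv v' hv'
    have hv' := hv'
    obtain ⟨Ei, hEi, hvEi⟩ := Finset.mem_biUnion.mp hv
    obtain ⟨Ej, hEj, hv'Ej⟩ := Finset.mem_biUnion.mp hv'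
    have hstar : ∀ {w : V} {E₀ : Finset (Finset V)}, w ∈ unitOf E E₀ →
        E.filter (fun e => w ∈ e) = E₀ := by
      intro w E₀ hw
      have := (Finset.mem_filter.mp hw).2
      simpa [starOf] using this
    have form : ∀ (E₀ : Finset (Finset V)), E₀ ∈ A → ∀ w ∈ unitOf E E₀,
        Lop E δV δE y w
          = ∑ e ∈ E₀, sigmaH δE e / c * ∑ u ∈ e \ unitOf E E₀, (y u - d) := by
      intro E₀ hE₀ w hw
      have hwU : w ∈ U := Finset.mem_biUnion.mpr ⟨E₀, hE₀, hw⟩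
      have hδw : δV w = c := hc w hwU
      have hyw : y w = d := hy w hwU
      unfold Lop
      rw [hstar hw]
      refine Finset.sum_congr rfl (fun e he => ?_)
      have hsum : ∑ u ∈ e, (y u - y w) = ∑ u ∈ e \ unitOf E E₀, (y u - d) := by
        rw [hyw]
        symm
        apply Finset.sum_subset Finset.sdiff_subset
        intro u hu hnu
        have huW : u ∈ unitOf E E₀ := by
          by_contra h; exact hnu (Finset.mem_sdiff.mpr ⟨hu, h⟩)
        have : y u = d := hy u (Finset.mem_biUnion.mpr ⟨E₀, hE₀, huW⟩)
        simp [this]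
      rw [hsum, hδw]
      unfold sigmaH
      ring
    rw [form Ei hEi v hvEi, form Ej hEj v' hv'Ej]
    rcases eq_or_ne Ei Ej with rfl | hne
    · rfl
    · obtain ⟨-, φ, hbij, hsd, hsig⟩ := hpairtwin Ei hEi Ej hEj hne
      refine Finset.sum_bij (fun e _ => φ e) ?_ ?_ ?_ ?_
      · intro e he
        exact hbij.mapsTo he
      · intro e₁ he₁ e₂ he₂ h
        exact hbij.injOn he₁ he₂ h
      · intro e' he'
        obtain ⟨e, he, hee⟩ := hbij.surjOn he'
        exact ⟨e, he, hee⟩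
      · intro e he
        rw [hsig e he, ← hsd e he]
  intro t ht
  induction t, ht using Nat.le_induction with
  | base => exact ⟨cs, hs⟩
  | succ t ht ih =>
    obtain ⟨ct, hct⟩ := ih
    by_cases hne : U.Nonempty
    · obtain ⟨v₀, hv₀⟩ := hne
      refine ⟨g ct + ε * Lop E δV δE (fun u => f (x t u)) v₀, fun v hv => ?_⟩
      rw [hdyn t v, hct v hv]
      congr 1
      congr 1
      exact key (fun u => f (x t u)) (f ct) (fun u hu => show f (x t u) = f ct by rw [hct u hu]) v hv v₀ hv₀
    · exact ⟨0, fun v hv => absurd ⟨v, hv⟩ hne⟩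
end

section
/- Let f, g : ℝ → ℝ be differentiable with |f′(s)| ≤ M_f and |g′(s)| ≤ M_g for all s ∈ ℝ, let {x_t} be a discrete dynamical network on H, let W_{E_0} be a unit of H with δ_V(v) = c for all v ∈ W_{E_0}, and set λ = Σ_{e∈E_0} δ_E(e)/(c·|e|). Then for all u, v ∈ W_{E_0} and all t: |x_{t+1}(u) − x_{t+1}(v)| ≤ (M_g + ε·λ·M_f)·|x_t(u) − x_t(v)|. -/
open Finset

/-- For a discrete dynamical network with differentiable `f, g` having bounded
derivatives, the difference of states of two vertices in a unit contracts by
the factor `M_g + ε·λ·M_f` at each time step, where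
`λ = Σ_{e∈E₀} δE e/(c·|e|)`. -/
theorem unit_perturbation_contraction {V : Type*} [Fintype V] [DecidableEq V]
    (E : Finset (Finset V)) (hE : ∀ e ∈ E, 2 ≤ e.card)
    (δV : V → ℝ) (hδV : ∀ v, 0 < δV v)
    (δE : Finset V → ℝ) (hδE : ∀ e ∈ E, 0 < δE e)
    (f g : ℝ → ℝ) (Mf Mg : ℝ)
    (hf : Differentiable ℝ f) (hf' : ∀ s : ℝ, |deriv f s| ≤ Mf)
    (hg : Differentiable ℝ g) (hg' : ∀ s : ℝ, |deriv g s| ≤ Mg)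
    (ε : ℝ) (hε : ε ∈ Set.Ioo (0 : ℝ) 1)
    (x : ℕ → V → ℝ)
    (hdyn : ∀ t v, x (t + 1) v
      = g (x t v) + ε * Lop E δV δE (fun u => f (x t u)) v)
    (E₀ : Finset (Finset V)) (hE₀ : E₀ ⊆ E)
    (hne : (unitOf E E₀).Nonempty)
    (c : ℝ) (hc : ∀ v ∈ unitOf E E₀, δV v = c) :
    ∀ u ∈ unitOf E E₀, ∀ v ∈ unitOf E E₀, ∀ t : ℕ,
      |x (t + 1) u - x (t + 1) v|
        ≤ (Mg + ε * (∑ e ∈ E₀, δE e / (c * (e.card : ℝ))) * Mf)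
          * |x t u - x t v| := by

  obtain ⟨w, hw⟩ := hne
  have hc0 : 0 < c := hc w hw ▸ hδV w
  have hMf : 0 ≤ Mf := le_trans (abs_nonneg _) (hf' 0)
  have hMg : 0 ≤ Mg := le_trans (abs_nonneg _) (hg' 0)
  have hεpos : 0 < ε := hε.1
  set lam := ∑ e ∈ E₀, δE e / (c * (e.card : ℝ)) with hlam
  have hlam0 : 0 ≤ lam := Finset.sum_nonneg fun e he =>
    div_nonneg (hδE e (hE₀ he)).le (mul_nonneg hc0.le (Nat.cast_nonneg _))
  have lip : ∀ (h : ℝ → ℝ), Differentiable ℝ h → ∀ M : ℝ, (∀ s, |deriv h s| ≤ M) →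
      ∀ a b : ℝ, |h a - h b| ≤ M * |a - b| := by
    intro h hdiff M hM a b
    have := Convex.norm_image_sub_le_of_norm_deriv_le (s := Set.univ)
      (fun y _ => hdiff y) (fun y _ => by simpa [Real.norm_eq_abs] using hM y)
      convex_univ (Set.mem_univ b) (Set.mem_univ a)
    simpa [Real.norm_eq_abs] using this
  intro u hu v hv t
  have hu' : E.filter (fun e => u ∈ e) = E₀ := (Finset.mem_filter.mp hu).2
  have hv' : E.filter (fun e => v ∈ e) = E₀ := (Finset.mem_filter.mp hv).2
  have key : ∀ (y : V → ℝ),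
      Lop E δV δE y u - Lop E δV δE y v = lam * (y v - y u) := by
    intro y
    unfold Lop
    rw [hu', hv', hc u hu, hc v hv, ← Finset.sum_sub_distrib, hlam, Finset.sum_mul]
    apply Finset.sum_congr rfl
    intro e he
    have hcard : (0:ℝ) < e.card := by
      have := hE e (hE₀ he); positivity
    have hsum : (∑ z ∈ e, (y z - y u)) - (∑ z ∈ e, (y z - y v))
        = (e.card : ℝ) * (y v - y u) := by
      rw [← Finset.sum_sub_distrib]
      have : ∀ z ∈ e, (y z - y u) - (y z - y v) = y v - y u := by intros; ring
      rw [Finset.sum_congr rfl this, Finset.sum_const, nsmul_eq_mul]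
    have : (δE e / c) * (1 / (e.card : ℝ) ^ 2) * (∑ z ∈ e, (y z - y u))
        - (δE e / c) * (1 / (e.card : ℝ) ^ 2) * (∑ z ∈ e, (y z - y v))
        = (δE e / c) * (1 / (e.card : ℝ) ^ 2)
          * ((∑ z ∈ e, (y z - y u)) - (∑ z ∈ e, (y z - y v))) := by ring
    rw [this, hsum]
    field_simp
  have hx : x (t+1) u - x (t+1) v
      = (g (x t u) - g (x t v)) + ε * lam * (f (x t v) - f (x t u)) := by
    rw [hdyn, hdyn]
    have := key (fun w => f (x t w))
    nlinarith [this]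
  rw [hx]
  calc |(g (x t u) - g (x t v)) + ε * lam * (f (x t v) - f (x t u))|
      ≤ |g (x t u) - g (x t v)| + |ε * lam * (f (x t v) - f (x t u))| := abs_add_le _ _
    _ ≤ Mg * |x t u - x t v| + ε * lam * (Mf * |x t v - x t u|) := by
        gcongr ?_ + ?_
        · exact lip g hg Mg hg' _ _
        · rw [abs_mul, abs_of_nonneg (mul_nonneg hεpos.le hlam0)]
          exact mul_le_mul_of_nonneg_left (lip f hf Mf hf' _ _)
            (mul_nonneg hεpos.le hlam0)
    _ = (Mg + ε * lam * Mf) * |x t u - x t v| := by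
        rw [abs_sub_comm (x t v)]; ring
end

section
/- Let f, g : ℝ → ℝ be differentiable with |f′(s)| ≤ M_f and |g′(s)| ≤ M_g for all s ∈ ℝ, let {x_t} be a discrete dynamical network on H, let W_{E_0} be a unit of H with δ_V(v) = c for all v ∈ W_{E_0}, and set λ = Σ_{e∈E_0} δ_E(e)/(c·|e|). If M_g + ε·λ·M_f < 1 (equivalently λ < (1 − M_g)/(ε·M_f)), then for all u, v ∈ W_{E_0}: |x_t(u) − x_t(v)| → 0 as t → ∞; i.e., cluster synchronization in the unit W_{E_0} is stable under perturbation. -/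
open Finset Filter

/-- Stability of cluster synchronization in a unit: if
`M_g + ε·λ·M_f < 1` with `λ = Σ_{e∈E₀} δE e/(c·|e|)`, then the states of any
two vertices of the unit asymptotically synchronize. -/
theorem unit_cluster_sync_stable {V : Type*} [Fintype V] [DecidableEq V]
    (E : Finset (Finset V)) (hE : ∀ e ∈ E, 2 ≤ e.card)
    (δV : V → ℝ) (hδV : ∀ v, 0 < δV v)
    (δE : Finset V → ℝ) (hδE : ∀ e ∈ E, 0 < δE e)
    (f g : ℝ → ℝ) (Mf Mg : ℝ)
    (hf : Differentiable ℝ f) (hf' : ∀ s : ℝ, |deriv f s| ≤ Mf)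
    (hg : Differentiable ℝ g) (hg' : ∀ s : ℝ, |deriv g s| ≤ Mg)
    (ε : ℝ) (hε : ε ∈ Set.Ioo (0 : ℝ) 1)
    (x : ℕ → V → ℝ)
    (hdyn : ∀ t v, x (t + 1) v
      = g (x t v) + ε * Lop E δV δE (fun u => f (x t u)) v)
    (E₀ : Finset (Finset V)) (hE₀ : E₀ ⊆ E)
    (hne : (unitOf E E₀).Nonempty)
    (c : ℝ) (hc : ∀ v ∈ unitOf E E₀, δV v = c)
    (hstab : Mg + ε * (∑ e ∈ E₀, δE e / (c * (e.card : ℝ))) * Mf < 1) :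
    ∀ u ∈ unitOf E E₀, ∀ v ∈ unitOf E E₀,
      Tendsto (fun t : ℕ => |x t u - x t v|) atTop (nhds 0) := by
  intro u hu v hv
  set lam : ℝ := ∑ e ∈ E₀, δE e / (c * (e.card : ℝ)) with hlam
  obtain ⟨w₀, hw₀⟩ := hne
  have hc0 : (0 : ℝ) < c := by rw [← hc w₀ hw₀]; exact hδV w₀
  have hMg0 : 0 ≤ Mg := le_trans (abs_nonneg _) (hg' 0)
  have hMf0 : 0 ≤ Mf := le_trans (abs_nonneg _) (hf' 0)
  have hε0 : 0 < ε := hε.1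
  have hlam0 : 0 ≤ lam := by
    apply Finset.sum_nonneg
    intro e he
    exact div_nonneg (hδE e (hE₀ he)).le (mul_nonneg hc0.le (Nat.cast_nonneg _))
  -- Lipschitz bounds from the mean value inequality
  have lip : ∀ (h : ℝ → ℝ) (M : ℝ), Differentiable ℝ h → (∀ s, |deriv h s| ≤ M) →
      ∀ a b : ℝ, |h a - h b| ≤ M * |a - b| := by
    intro h M hh hM a b
    have := Convex.norm_image_sub_le_of_norm_deriv_le
      (fun y (_ : y ∈ (Set.univ : Set ℝ)) => (hh y))
      (fun y _ => hM y) convex_univ (Set.mem_univ b) (Set.mem_univ a)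
    simpa [Real.norm_eq_abs] using this
  -- Key algebraic identity for the diffusion operator on a unit
  have hsu : E.filter (fun e => u ∈ e) = E₀ := by
    have := (Finset.mem_filter.mp hu).2
    simpa [starOf] using this
  have hsv : E.filter (fun e => v ∈ e) = E₀ := by
    have := (Finset.mem_filter.mp hv).2
    simpa [starOf] using this
  have key : ∀ y : V → ℝ, Lop E δV δE y u - Lop E δV δE y v
      = -(lam * (y u - y v)) := by
    intro y
    unfold Lop
    rw [hsu, hsv, hc u hu, hc v hv, ← Finset.sum_sub_distrib, hlam,
      Finset.sum_mul, ← Finset.sum_neg_distrib]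
    apply Finset.sum_congr rfl
    intro e he
    have hcard : (0 : ℝ) < (e.card : ℝ) := by
      have := hE e (hE₀ he)
      exact_mod_cast lt_of_lt_of_le two_pos this
    have h1 : (∑ w ∈ e, (y w - y u)) - (∑ w ∈ e, (y w - y v))
        = (e.card : ℝ) * (y v - y u) := by
      rw [← Finset.sum_sub_distrib]
      have : ∀ w ∈ e, (y w - y u) - (y w - y v) = y v - y u := by
        intro w _; ring
      rw [Finset.sum_congr rfl this, Finset.sum_const, nsmul_eq_mul]
    rw [← mul_sub, h1]
    field_simp
    ring
  set r : ℝ := Mg + ε * lam * Mf with hr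
  have hr0 : 0 ≤ r := by positivity
  have hr1 : r < 1 := hstab
  set d : ℕ → ℝ := fun t => x t u - x t v with hd
  have step : ∀ t, |d (t + 1)| ≤ r * |d t| := by
    intro t
    have hdiff : d (t + 1) = (g (x t u) - g (x t v))
        - ε * (lam * (f (x t u) - f (x t v))) := by
      have hkey := key (fun w => f (x t w))
      simp only [hd, hdyn t u, hdyn t v]
      have : Lop E δV δE (fun w => f (x t w)) u
          - Lop E δV δE (fun w => f (x t w)) v
          = -(lam * (f (x t u) - f (x t v))) := hkey
      nlinarith [this]
    rw [hdiff]
    calc |(g (x t u) - g (x t v)) - ε * (lam * (f (x t u) - f (x t v)))|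
        ≤ |g (x t u) - g (x t v)| + |ε * (lam * (f (x t u) - f (x t v)))| :=
          abs_sub _ _
      _ ≤ Mg * |d t| + ε * lam * (Mf * |d t|) := by
          apply add_le_add
          · exact lip g Mg hg hg' _ _
          · rw [abs_mul, abs_mul, abs_of_pos hε0, abs_of_nonneg hlam0]
            have h1 := lip f Mf hf hf' (x t u) (x t v)
            have h2 : 0 ≤ ε * lam := mul_nonneg hε0.le hlam0
            calc ε * (lam * |f (x t u) - f (x t v)|)
                = (ε * lam) * |f (x t u) - f (x t v)| := by ring
              _ ≤ (ε * lam) * (Mf * |d t|) := mul_le_mul_of_nonneg_left h1 h2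
              _ = ε * lam * (Mf * |d t|) := by ring
      _ = r * |d t| := by ring
  have bound : ∀ t, |d t| ≤ |d 0| * r ^ t := by
    intro t
    induction t with
    | zero => simp
    | succ n ih =>
      calc |d (n + 1)| ≤ r * |d n| := step n
        _ ≤ r * (|d 0| * r ^ n) := mul_le_mul_of_nonneg_left ih hr0
        _ = |d 0| * r ^ (n + 1) := by ring
  have hgeo : Tendsto (fun t : ℕ => |d 0| * r ^ t) atTop (nhds 0) := by
    have := tendsto_pow_atTop_nhds_zero_of_lt_one hr0 hr1
    simpa using this.const_mul (|d 0|)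
  exact squeeze_zero (fun t => abs_nonneg _) bound hgeo
end

section
/- Let f, g : ℝ → ℝ be differentiable with |f′(s)| ≤ M_f and |g′(s)| ≤ M_g for all s ∈ ℝ, let ‖·‖ be the norm induced by the weighted inner product (x,y)_V on ℝ^V, and let ‖L‖ be the corresponding operator norm of the general diffusion operator L. If {x_t} and {y_t} are two discrete dynamical networks on H (with the same f, g, ε), then ‖y_{t+1} − x_{t+1}‖ ≤ (M_g + ε·‖L‖·M_f)·‖y_t − x_t‖ for all t; in particular, if M_g + ε·‖L‖·M_f < 1 then ‖y_t − x_t‖ → 0 as t → ∞, so synchronization of the network is stable under small perturbations. -/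
open Finset Filter

/-- The norm on `ℝ^V` induced by the weighted inner product
`(x,y)_V = Σ_v δV v · x v · y v`. -/
noncomputable def normV {V : Type*} [Fintype V] (δV : V → ℝ) (x : V → ℝ) : ℝ :=
  Real.sqrt (∑ v, δV v * x v * x v)

/-- The operator norm of the general diffusion operator w.r.t. the norm
induced by the weighted inner product. -/
noncomputable def opNormL {V : Type*} [Fintype V] [DecidableEq V]
    (E : Finset (Finset V)) (δV : V → ℝ) (δE : Finset V → ℝ) : ℝ :=
  sInf {C : ℝ | 0 ≤ C ∧ ∀ x : V → ℝ, normV δV (Lop E δV δE x) ≤ C * normV δV x}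

section aux
variable {V : Type*} [Fintype V]

lemma normV_nonneg (δV : V → ℝ) (x : V → ℝ) : 0 ≤ normV δV x := Real.sqrt_nonneg _

lemma normV_eq_euclidean (δV : V → ℝ) (h : ∀ v, 0 ≤ δV v) (x : V → ℝ) :
    normV δV x
      = ‖(WithLp.equiv 2 (V → ℝ)).symm (fun v => Real.sqrt (δV v) * x v)‖ := by
  rw [EuclideanSpace.norm_eq, normV]
  refine congrArg Real.sqrt ?_
  refine Finset.sum_congr rfl fun v _ => ?_
  rw [WithLp.equiv_symm_apply, PiLp.toLp_apply, Real.norm_eq_abs, sq_abs, mul_pow, Real.sq_sqrt (h v)]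
  ring

lemma normV_add_le (δV : V → ℝ) (h : ∀ v, 0 ≤ δV v) (a b : V → ℝ) :
    normV δV (a + b) ≤ normV δV a + normV δV b := by
  rw [normV_eq_euclidean δV h, normV_eq_euclidean δV h, normV_eq_euclidean δV h]
  have heq : (WithLp.equiv 2 (V → ℝ)).symm (fun v => Real.sqrt (δV v) * (a + b) v)
      = (WithLp.equiv 2 (V → ℝ)).symm (fun v => Real.sqrt (δV v) * a v)
        + (WithLp.equiv 2 (V → ℝ)).symm (fun v => Real.sqrt (δV v) * b v) := by
    rw [WithLp.equiv_symm_apply, ← WithLp.toLp_add]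
    refine congrArg _ ?_
    funext v
    simp only [Pi.add_apply]
    ring
  rw [heq]
  exact norm_add_le _ _

lemma normV_le_sqrt (δV : V → ℝ) (h : ∀ v, 0 ≤ δV v) (z c : V → ℝ)
    (hc : ∀ v, |z v| ≤ c v) :
    normV δV z ≤ Real.sqrt (∑ v, δV v * c v * c v) := by
  apply Real.sqrt_le_sqrt
  refine Finset.sum_le_sum fun v _ => ?_
  have h1 : z v * z v ≤ c v * c v := by
    have := hc v
    nlinarith [abs_nonneg (z v), le_abs_self (z v), neg_abs_le (z v)]
  nlinarith [h v]

lemma normV_le_mul (δV : V → ℝ) (h : ∀ v, 0 ≤ δV v) (z w : V → ℝ) (c : ℝ)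
    (hc0 : 0 ≤ c) (hc : ∀ v, |z v| ≤ c * |w v|) :
    normV δV z ≤ c * normV δV w := by
  refine (normV_le_sqrt δV h z (fun v => c * |w v|) hc).trans_eq ?_
  have h1 : ∑ v, δV v * (c * |w v|) * (c * |w v|) = c ^ 2 * ∑ v, δV v * w v * w v := by
    rw [Finset.mul_sum]
    refine Finset.sum_congr rfl fun v _ => ?_
    have h2 : |w v| * |w v| = w v * w v := abs_mul_abs_self _
    linear_combination (δV v * c ^ 2) * h2
  rw [h1, Real.sqrt_mul (sq_nonneg c), Real.sqrt_sq hc0, normV]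

lemma abs_le_normV (δV : V → ℝ) (h : ∀ v, 0 < δV v) (x : V → ℝ) (v : V) :
    |x v| ≤ (Real.sqrt (δV v))⁻¹ * normV δV x := by
  have hs : 0 < Real.sqrt (δV v) := Real.sqrt_pos.2 (h v)
  have key : (Real.sqrt (δV v) * |x v|) ^ 2 ≤ ∑ u, δV u * x u * x u := by
    have h1 : (Real.sqrt (δV v) * |x v|) ^ 2 = δV v * x v * x v := by
      rw [mul_pow, Real.sq_sqrt (h v).le, sq_abs]
      ring
    rw [h1]
    exact Finset.single_le_sum (f := fun u => δV u * x u * x u)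
      (fun u _ => by
        show 0 ≤ δV u * x u * x u
        nlinarith [(h u).le, mul_self_nonneg (x u)])
      (Finset.mem_univ v)
  have h2 : Real.sqrt (δV v) * |x v| ≤ normV δV x := by
    rw [normV, Real.le_sqrt (by positivity) ?_]
    · exact key
    · exact Finset.sum_nonneg fun u _ => by nlinarith [(h u).le, mul_self_nonneg (x u)]
  calc |x v| = (Real.sqrt (δV v))⁻¹ * (Real.sqrt (δV v) * |x v|) := by
        field_simp
    _ ≤ (Real.sqrt (δV v))⁻¹ * normV δV x := by
        exact mul_le_mul_of_nonneg_left h2 (by positivity)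

end aux

section lop
variable {V : Type*} [Fintype V] [DecidableEq V]

lemma Lop_sub (E : Finset (Finset V)) (δV : V → ℝ) (δE : Finset V → ℝ)
    (a b : V → ℝ) (v : V) :
    Lop E δV δE a v - Lop E δV δE b v = Lop E δV δE (fun u => a u - b u) v := by
  unfold Lop
  rw [← Finset.sum_sub_distrib]
  refine Finset.sum_congr rfl fun e _ => ?_
  rw [← mul_sub, ← Finset.sum_sub_distrib]
  refine congrArg _ (Finset.sum_congr rfl fun u _ => ?_)
  ring

lemma exists_bound (E : Finset (Finset V)) (δV : V → ℝ) (hδV : ∀ v, 0 < δV v)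
    (δE : Finset V → ℝ) (hδE : ∀ e ∈ E, 0 < δE e) :
    ∃ C : ℝ, 0 ≤ C ∧ ∀ x : V → ℝ, normV δV (Lop E δV δE x) ≤ C * normV δV x := by
  set B : V → ℝ := fun v => ∑ e ∈ E.filter (fun e => v ∈ e),
      (δE e / δV v) * (1 / (e.card : ℝ) ^ 2)
        * ∑ u ∈ e, ((Real.sqrt (δV u))⁻¹ + (Real.sqrt (δV v))⁻¹) with hB
  have hBnn : ∀ v, 0 ≤ B v := by
    intro v
    refine Finset.sum_nonneg fun e he => ?_
    have he' := (Finset.mem_filter.1 he).1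
    have h1 : 0 ≤ δE e / δV v := le_of_lt (div_pos (hδE e he') (hδV v))
    have h2 : (0:ℝ) ≤ 1 / (e.card : ℝ) ^ 2 := by positivity
    have h3 : 0 ≤ ∑ u ∈ e, ((Real.sqrt (δV u))⁻¹ + (Real.sqrt (δV v))⁻¹) :=
      Finset.sum_nonneg fun u _ => by positivity
    positivity
  refine ⟨Real.sqrt (∑ v, δV v * B v * B v), Real.sqrt_nonneg _, fun x => ?_⟩
  have hpoint : ∀ v, |Lop E δV δE x v| ≤ B v * normV δV x := by
    intro v
    unfold Lop
    refine (Finset.abs_sum_le_sum_abs _ _).trans ?_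
    rw [hB, Finset.sum_mul]
    refine Finset.sum_le_sum fun e he => ?_
    have he' := (Finset.mem_filter.1 he).1
    have hcoef : 0 ≤ (δE e / δV v) * (1 / (e.card : ℝ) ^ 2) := by
      have := le_of_lt (div_pos (hδE e he') (hδV v))
      positivity
    have hsum : |∑ u ∈ e, (x u - x v)|
        ≤ (∑ u ∈ e, ((Real.sqrt (δV u))⁻¹ + (Real.sqrt (δV v))⁻¹)) * normV δV x := by
      refine (Finset.abs_sum_le_sum_abs _ _).trans ?_
      rw [Finset.sum_mul]
      refine Finset.sum_le_sum fun u _ => ?_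
      calc |x u - x v| ≤ |x u| + |x v| := abs_sub _ _
        _ ≤ (Real.sqrt (δV u))⁻¹ * normV δV x + (Real.sqrt (δV v))⁻¹ * normV δV x :=
            add_le_add (abs_le_normV δV hδV x u) (abs_le_normV δV hδV x v)
        _ = ((Real.sqrt (δV u))⁻¹ + (Real.sqrt (δV v))⁻¹) * normV δV x := by ring
    calc |δE e / δV v * (1 / (e.card : ℝ) ^ 2) * ∑ u ∈ e, (x u - x v)|
        = δE e / δV v * (1 / (e.card : ℝ) ^ 2) * |∑ u ∈ e, (x u - x v)| := by
          rw [abs_mul, abs_of_nonneg hcoef]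
      _ ≤ δE e / δV v * (1 / (e.card : ℝ) ^ 2)
            * ((∑ u ∈ e, ((Real.sqrt (δV u))⁻¹ + (Real.sqrt (δV v))⁻¹)) * normV δV x) :=
          mul_le_mul_of_nonneg_left hsum hcoef
      _ = δE e / δV v * (1 / (e.card : ℝ) ^ 2)
            * (∑ u ∈ e, ((Real.sqrt (δV u))⁻¹ + (Real.sqrt (δV v))⁻¹)) * normV δV x := by
          ring
  refine (normV_le_sqrt δV (fun v => (hδV v).le) _ (fun v => B v * normV δV x)
    hpoint).trans_eq ?_
  have h1 : ∑ v, δV v * (B v * normV δV x) * (B v * normV δV x)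
      = (∑ v, δV v * B v * B v) * normV δV x ^ 2 := by
    rw [Finset.sum_mul]
    exact Finset.sum_congr rfl fun v _ => by ring
  rw [h1, Real.sqrt_mul ?_ , Real.sqrt_sq (normV_nonneg δV x)]
  exact Finset.sum_nonneg fun v _ => by nlinarith [(hδV v).le, mul_self_nonneg (B v), hBnn v]

lemma opNormL_spec (E : Finset (Finset V)) (δV : V → ℝ) (hδV : ∀ v, 0 < δV v)
    (δE : Finset V → ℝ) (hδE : ∀ e ∈ E, 0 < δE e) :
    0 ≤ opNormL E δV δE ∧
      ∀ x : V → ℝ, normV δV (Lop E δV δE x) ≤ opNormL E δV δE * normV δV x := by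
  set S := {C : ℝ | 0 ≤ C ∧ ∀ x : V → ℝ, normV δV (Lop E δV δE x) ≤ C * normV δV x}
    with hS
  obtain ⟨C, hC0, hC⟩ := exists_bound E δV hδV δE hδE
  have hne : S.Nonempty := ⟨C, hC0, hC⟩
  have hbdd : BddBelow S := ⟨0, fun b hb => hb.1⟩
  have hnn : 0 ≤ opNormL E δV δE := le_csInf hne fun b hb => hb.1
  refine ⟨hnn, fun x => ?_⟩
  rcases eq_or_lt_of_le (normV_nonneg δV x) with h0 | hpos
  · have hz : normV δV (Lop E δV δE x) ≤ 0 := by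
      have := hC x
      rw [← h0] at this
      simpa using this
    calc normV δV (Lop E δV δE x) ≤ 0 := hz
      _ = opNormL E δV δE * normV δV x := by rw [← h0, mul_zero]
  · have hdiv : normV δV (Lop E δV δE x) / normV δV x ≤ opNormL E δV δE := by
      refine le_csInf hne fun b hb => ?_
      rw [div_le_iff₀ hpos]
      exact hb.2 x
    calc normV δV (Lop E δV δE x)
        = normV δV (Lop E δV δE x) / normV δV x * normV δV x := by
          field_simp
      _ ≤ opNormL E δV δE * normV δV x :=
          mul_le_mul_of_nonneg_right hdiv hpos.le

end lop

/-- For two trajectories of the same discrete dynamical network, the weighted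
norm of their difference contracts by the factor `M_g + ε·‖L‖·M_f` at each
step; in particular, if `M_g + ε·‖L‖·M_f < 1`, the trajectories converge to
each other, so synchronization is stable under small perturbations. -/
theorem network_sync_stable {V : Type*} [Fintype V] [DecidableEq V]
    (E : Finset (Finset V)) (hE : ∀ e ∈ E, 2 ≤ e.card)
    (δV : V → ℝ) (hδV : ∀ v, 0 < δV v)
    (δE : Finset V → ℝ) (hδE : ∀ e ∈ E, 0 < δE e)
    (f g : ℝ → ℝ) (Mf Mg : ℝ)
    (hf : Differentiable ℝ f) (hf' : ∀ s : ℝ, |deriv f s| ≤ Mf)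
    (hg : Differentiable ℝ g) (hg' : ∀ s : ℝ, |deriv g s| ≤ Mg)
    (ε : ℝ) (hε : ε ∈ Set.Ioo (0 : ℝ) 1)
    (x y : ℕ → V → ℝ)
    (hdynx : ∀ t v, x (t + 1) v
      = g (x t v) + ε * Lop E δV δE (fun u => f (x t u)) v)
    (hdyny : ∀ t v, y (t + 1) v
      = g (y t v) + ε * Lop E δV δE (fun u => f (y t u)) v) :
    (∀ t : ℕ, normV δV (y (t + 1) - x (t + 1))
        ≤ (Mg + ε * opNormL E δV δE * Mf) * normV δV (y t - x t))
    ∧ (Mg + ε * opNormL E δV δE * Mf < 1 →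
        Tendsto (fun t : ℕ => normV δV (y t - x t)) atTop (nhds 0)) := by
  obtain ⟨hop0, hop⟩ := opNormL_spec E δV hδV δE hδE
  have hδV' : ∀ v, 0 ≤ δV v := fun v => (hδV v).le
  have hMg0 : 0 ≤ Mg := (abs_nonneg _).trans (hg' 0)
  have hMf0 : 0 ≤ Mf := (abs_nonneg _).trans (hf' 0)
  have hglip : ∀ a b : ℝ, |g a - g b| ≤ Mg * |a - b| := fun a b => by
    have := Convex.norm_image_sub_le_of_norm_deriv_le (f := g) (s := Set.univ)
      (fun s _ => hg s) (fun s _ => by simpa [Real.norm_eq_abs] using hg' s)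
      convex_univ (Set.mem_univ b) (Set.mem_univ a)
    simpa [Real.norm_eq_abs] using this
  have hflip : ∀ a b : ℝ, |f a - f b| ≤ Mf * |a - b| := fun a b => by
    have := Convex.norm_image_sub_le_of_norm_deriv_le (f := f) (s := Set.univ)
      (fun s _ => hf s) (fun s _ => by simpa [Real.norm_eq_abs] using hf' s)
      convex_univ (Set.mem_univ b) (Set.mem_univ a)
    simpa [Real.norm_eq_abs] using this
  have hstep : ∀ t : ℕ, normV δV (y (t + 1) - x (t + 1))
      ≤ (Mg + ε * opNormL E δV δE * Mf) * normV δV (y t - x t) := by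
    intro t
    set d : V → ℝ := y t - x t with hd
    set G : V → ℝ := fun v => g (y t v) - g (x t v) with hG
    set Z : V → ℝ := Lop E δV δE (fun u => f (y t u) - f (x t u)) with hZ
    set W : V → ℝ := fun v => ε * Z v with hW
    have hdecomp : y (t + 1) - x (t + 1) = G + W := by
      funext v
      have hls := Lop_sub E δV δE (fun u => f (y t u)) (fun u => f (x t u)) v
      simp only [Pi.sub_apply, Pi.add_apply, hdyny, hdynx, hG, hW, hZ]
      rw [← hls]
      ring
    have hGle : normV δV G ≤ Mg * normV δV d := by
      refine normV_le_mul δV hδV' G d Mg hMg0 fun v => ?_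
      rw [hG, hd]
      simpa [Pi.sub_apply] using hglip (y t v) (x t v)
    have hFle : normV δV (fun u => f (y t u) - f (x t u)) ≤ Mf * normV δV d := by
      refine normV_le_mul δV hδV' _ d Mf hMf0 fun v => ?_
      simpa [Pi.sub_apply, hd] using hflip (y t v) (x t v)
    have hZle : normV δV Z ≤ opNormL E δV δE * (Mf * normV δV d) := by
      refine (hop _).trans ?_
      exact mul_le_mul_of_nonneg_left hFle hop0
    have hWle : normV δV W ≤ ε * (opNormL E δV δE * (Mf * normV δV d)) := by
      have h1 : normV δV W ≤ ε * normV δV Z := by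
        refine normV_le_mul δV hδV' W Z ε hε.1.le fun v => ?_
        rw [hW, abs_mul, abs_of_nonneg hε.1.le]
      exact h1.trans (mul_le_mul_of_nonneg_left hZle hε.1.le)
    calc normV δV (y (t + 1) - x (t + 1)) = normV δV (G + W) := by rw [hdecomp]
      _ ≤ normV δV G + normV δV W := normV_add_le δV hδV' G W
      _ ≤ Mg * normV δV d + ε * (opNormL E δV δE * (Mf * normV δV d)) :=
          add_le_add hGle hWle
      _ = (Mg + ε * opNormL E δV δE * Mf) * normV δV d := by ring
  refine ⟨hstep, fun hr => ?_⟩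
  set r : ℝ := Mg + ε * opNormL E δV δE * Mf with hrdef
  have hr0 : 0 ≤ r := by
    have : 0 ≤ ε * opNormL E δV δE * Mf :=
      mul_nonneg (mul_nonneg hε.1.le hop0) hMf0
    linarith
  have hiter : ∀ t : ℕ, normV δV (y t - x t) ≤ r ^ t * normV δV (y 0 - x 0) := by
    intro t
    induction t with
    | zero => simp
    | succ n ih =>
      calc normV δV (y (n + 1) - x (n + 1)) ≤ r * normV δV (y n - x n) := hstep n
        _ ≤ r * (r ^ n * normV δV (y 0 - x 0)) := mul_le_mul_of_nonneg_left ih hr0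
        _ = r ^ (n + 1) * normV δV (y 0 - x 0) := by ring
  refine squeeze_zero (fun t => normV_nonneg δV _) hiter ?_
  have := (tendsto_pow_atTop_nhds_zero_of_lt_one hr0 hr).mul_const
    (normV δV (y 0 - x 0))
  simpa using this
end

section
/- Let f, g : ℝ → ℝ be differentiable with |f′(s)| ≤ M_f and |g′(s)| ≤ M_g for all s ∈ ℝ, let {x_t} be a discrete dynamical network on H, let W_{E_i} and W_{E_j} be twin units of H with σ-preserving canonical bijection φ : E_i → E_j, and suppose δ_V(v) = c for all v ∈ W_{E_i} ∪ W_{E_j}. Set λ₁ = Σ_{e∈E_i} δ_E(e)/(c·|e|), λ₂ = Σ_{e∈E_j} δ_E(e)/(c·|e|), and λ₃ = (1/c)·Σ_{e∈E_i} σ(e)·|e \ W_{E_i}|, where σ(e) = δ_E(e)/|e|². If M_g + ε·λ·M_f < 1 for every λ ∈ {λ₁, λ₂, λ₃}, then for all u, v ∈ W_{E_i} ∪ W_{E_j}: |x_t(u) − x_t(v)| → 0 as t → ∞. -/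
open Finset Filter

lemma lip_of_deriv {h : ℝ → ℝ} {M : ℝ} (hd : Differentiable ℝ h)
    (hb : ∀ s, |deriv h s| ≤ M) (a b : ℝ) : |h a - h b| ≤ M * |a - b| := by
  have hM : 0 ≤ M := le_trans (abs_nonneg _) (hb 0)
  have : LipschitzWith ⟨M, hM⟩ h := by
    apply lipschitzWith_of_nnnorm_deriv_le hd
    intro s
    change ‖deriv h s‖ ≤ M
    simpa [Real.norm_eq_abs] using hb s
  have h2 := this.dist_le_mul a b
  rw [Real.dist_eq, Real.dist_eq] at h2
  exact h2

lemma sum_split {V : Type*} [DecidableEq V] (e W : Finset V) (h : V → ℝ) :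
    ∑ w ∈ e, h w = ∑ w ∈ e ∩ W, h w + ∑ w ∈ e \ W, h w := by
  rw [← Finset.sum_sdiff (Finset.inter_subset_left (s₁ := e) (s₂ := W)),
    Finset.sdiff_inter_self_left, add_comm]

lemma nmulpow_tendsto {ρ : ℝ} (h0 : 0 ≤ ρ) (h1 : ρ < 1) :
    Tendsto (fun t : ℕ => (t : ℝ) * ρ ^ (t - 1)) atTop (nhds 0) := by
  rw [← tendsto_add_atTop_iff_nat 1]
  have hs : Summable (fun n : ℕ => (n : ℝ) ^ 1 * ρ ^ n) :=
    summable_pow_mul_geometric_of_norm_lt_one 1 (by rwa [Real.norm_eq_abs, abs_of_nonneg h0])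
  have h2 := hs.tendsto_atTop_zero
  have h3 : Tendsto (fun n : ℕ => ρ ^ n) atTop (nhds 0) :=
    tendsto_pow_atTop_nhds_zero_of_lt_one h0 h1
  have h4 := h2.add h3
  simp only [pow_one, add_zero] at h4
  refine h4.congr (fun n => ?_)
  push_cast
  ring

lemma Lop_eq {V : Type*} [Fintype V] [DecidableEq V]
    (E : Finset (Finset V)) (δV : V → ℝ) (δE : Finset V → ℝ) (y : V → ℝ) (v : V) :
    Lop E δV δE y v
      = ∑ e ∈ starOf E v, (1 / δV v) * sigmaH δE e * ((∑ w ∈ e, y w) - e.card * y v) := by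
  unfold Lop starOf sigmaH
  refine Finset.sum_congr rfl (fun e he => ?_)
  rw [Finset.sum_sub_distrib, Finset.sum_const, nsmul_eq_mul]
  ring

lemma Lop_sub_same {V : Type*} [Fintype V] [DecidableEq V]
    (E : Finset (Finset V)) (hE : ∀ e ∈ E, 2 ≤ e.card)
    (δV : V → ℝ) (δE : Finset V → ℝ) (E0 : Finset (Finset V)) (hE0 : E0 ⊆ E)
    {u v : V} (hu : starOf E u = E0) (hv : starOf E v = E0)
    {c : ℝ} (hcu : δV u = c) (hcv : δV v = c) (y : V → ℝ) :
    Lop E δV δE y u - Lop E δV δE y v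
      = (∑ e ∈ E0, δE e / (c * (e.card : ℝ))) * (y v - y u) := by
  rw [Lop_eq, Lop_eq, hu, hv, hcu, hcv, ← Finset.sum_sub_distrib, Finset.sum_mul]
  refine Finset.sum_congr rfl (fun e he => ?_)
  have hcard : (e.card : ℝ) ≠ 0 := by
    have := hE e (hE0 he); positivity
  have hinv : (e.card : ℝ) * (((e.card : ℝ)) ^ 2)⁻¹ = ((e.card : ℝ))⁻¹ := by
    rw [pow_two, mul_inv, ← mul_assoc, mul_inv_cancel₀ hcard, one_mul]
  unfold sigmaH
  linear_combination (δE e * c⁻¹ * (y v - y u)) * hinv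

lemma Lop_sub_cross {V : Type*} [Fintype V] [DecidableEq V]
    (E : Finset (Finset V)) (δV : V → ℝ) (δE : Finset V → ℝ)
    (Ei Ej : Finset (Finset V)) (Wi Wj : Finset V)
    (φ : Finset V → Finset V) (hφ : Set.BijOn φ ↑Ei ↑Ej)
    (htwin : ∀ e ∈ Ei, e \ Wi = φ e \ Wj)
    (hσ : ∀ e ∈ Ei, sigmaH δE (φ e) = sigmaH δE e)
    {u v : V} (hu : starOf E u = Ei) (hv : starOf E v = Ej)
    {c : ℝ} (hcu : δV u = c) (hcv : δV v = c) (y : V → ℝ) :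
    Lop E δV δE y u - Lop E δV δE y v
      = -((1 / c) * ∑ e ∈ Ei, sigmaH δE e * ((e \ Wi).card : ℝ)) * (y u - y v)
        + (1 / c) * ∑ e ∈ Ei, sigmaH δE e *
            ((∑ w ∈ e ∩ Wi, (y w - y u)) - ∑ w ∈ φ e ∩ Wj, (y w - y v)) := by
  rw [Lop_eq, Lop_eq, hu, hv, hcu, hcv]
  have hswap : ∑ e ∈ Ej, (1 / c) * sigmaH δE e * ((∑ w ∈ e, y w) - e.card * y v)
      = ∑ e ∈ Ei, (1 / c) * sigmaH δE (φ e) * ((∑ w ∈ φ e, y w) - (φ e).card * y v) := by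
    refine (Finset.sum_nbij φ (fun a ha => ?_) hφ.injOn hφ.surjOn (fun a ha => rfl)).symm
    exact hφ.mapsTo ha
  rw [hswap, ← Finset.sum_sub_distrib, neg_mul, Finset.mul_sum, Finset.mul_sum,
    Finset.sum_mul, ← Finset.sum_neg_distrib, ← Finset.sum_add_distrib]
  refine Finset.sum_congr rfl (fun e he => ?_)
  have h1 : (e.card : ℝ) = ((e ∩ Wi).card : ℝ) + ((e \ Wi).card : ℝ) := by
    rw [← Finset.card_inter_add_card_sdiff e Wi]; push_cast; ring
  have h2 : ((φ e).card : ℝ) = (((φ e) ∩ Wj).card : ℝ) + ((e \ Wi).card : ℝ) := by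
    rw [← Finset.card_inter_add_card_sdiff (φ e) Wj, ← htwin e he]; push_cast; ring
  rw [hσ e he, sum_split e Wi y, sum_split (φ e) Wj y, ← htwin e he, h1, h2,
    Finset.sum_sub_distrib, Finset.sum_sub_distrib, Finset.sum_const, Finset.sum_const,
    nsmul_eq_mul, nsmul_eq_mul]
  ring

lemma conv_of_contract {q : ℝ} (hq0 : 0 ≤ q) (hq1 : q < 1) (d : ℕ → ℝ)
    (hd0 : ∀ t, 0 ≤ d t) (hstep : ∀ t, d (t + 1) ≤ q * d t) :
    Tendsto d atTop (nhds 0) := by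
  have hb : ∀ t, d t ≤ q ^ t * d 0 := by
    intro t
    induction t with
    | zero => simp
    | succ t ih =>
      calc d (t + 1) ≤ q * d t := hstep t
        _ ≤ q * (q ^ t * d 0) := mul_le_mul_of_nonneg_left ih hq0
        _ = q ^ (t + 1) * d 0 := by rw [pow_succ]; ring
  have := (tendsto_pow_atTop_nhds_zero_of_lt_one hq0 hq1).mul_const (d 0)
  rw [zero_mul] at this
  exact squeeze_zero hd0 hb this

set_option maxHeartbeats 2000000 in
/-- Stability of cluster synchronization in the union of twin units: if
`M_g + ε·λ·M_f < 1` for `λ ∈ {λ₁, λ₂, λ₃}`, then the states of any two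
vertices of `W_{E_i} ∪ W_{E_j}` asymptotically synchronize. -/
theorem twin_units_cluster_sync_stable {V : Type*} [Fintype V] [DecidableEq V]
    (E : Finset (Finset V)) (hE : ∀ e ∈ E, 2 ≤ e.card)
    (δV : V → ℝ) (hδV : ∀ v, 0 < δV v)
    (δE : Finset V → ℝ) (hδE : ∀ e ∈ E, 0 < δE e)
    (f g : ℝ → ℝ) (Mf Mg : ℝ)
    (hf : Differentiable ℝ f) (hf' : ∀ s : ℝ, |deriv f s| ≤ Mf)
    (hg : Differentiable ℝ g) (hg' : ∀ s : ℝ, |deriv g s| ≤ Mg)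
    (ε : ℝ) (hε : ε ∈ Set.Ioo (0 : ℝ) 1)
    (x : ℕ → V → ℝ)
    (hdyn : ∀ t v, x (t + 1) v
      = g (x t v) + ε * Lop E δV δE (fun u => f (x t u)) v)
    (Ei Ej : Finset (Finset V)) (hEi : Ei ⊆ E) (hEj : Ej ⊆ E)
    (hni : (unitOf E Ei).Nonempty) (hnj : (unitOf E Ej).Nonempty)
    (hWne : unitOf E Ei ≠ unitOf E Ej)
    (φ : Finset V → Finset V) (hφ : Set.BijOn φ ↑Ei ↑Ej)
    (htwin : ∀ e ∈ Ei, e \ unitOf E Ei = φ e \ unitOf E Ej)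
    (hσ : ∀ e ∈ Ei, sigmaH δE (φ e) = sigmaH δE e)
    (c : ℝ) (hc : ∀ v ∈ unitOf E Ei ∪ unitOf E Ej, δV v = c)
    (hstab : ∀ lam ∈ ({∑ e ∈ Ei, δE e / (c * (e.card : ℝ)),
        ∑ e ∈ Ej, δE e / (c * (e.card : ℝ)),
        (1 / c) * ∑ e ∈ Ei, sigmaH δE e * ((e \ unitOf E Ei).card : ℝ)}
          : Set ℝ),
      Mg + ε * lam * Mf < 1) :
    ∀ u ∈ unitOf E Ei ∪ unitOf E Ej, ∀ v ∈ unitOf E Ei ∪ unitOf E Ej,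
      Tendsto (fun t : ℕ => |x t u - x t v|) atTop (nhds 0) := by
  set Wi := unitOf E Ei with hWi
  set Wj := unitOf E Ej with hWj
  have hmemi : ∀ w, w ∈ Wi ↔ starOf E w = Ei := by
    intro w; simp [hWi, unitOf]
  have hmemj : ∀ w, w ∈ Wj ↔ starOf E w = Ej := by
    intro w; simp [hWj, unitOf]
  obtain ⟨v₀, hv₀⟩ := hni
  have hc0 : 0 < c := by
    have h1 := hδV v₀
    rwa [hc v₀ (Finset.mem_union_left _ hv₀)] at h1
  have Mf0 : 0 ≤ Mf := le_trans (abs_nonneg _) (hf' 0)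
  have Mg0 : 0 ≤ Mg := le_trans (abs_nonneg _) (hg' 0)
  have hε0 : 0 < ε := hε.1
  -- the three rates
  set lam1 : ℝ := ∑ e ∈ Ei, δE e / (c * (e.card : ℝ)) with hlam1
  set lam2 : ℝ := ∑ e ∈ Ej, δE e / (c * (e.card : ℝ)) with hlam2
  set lam3 : ℝ := (1 / c) * ∑ e ∈ Ei, sigmaH δE e * ((e \ Wi).card : ℝ) with hlam3
  have hσnn : ∀ e ∈ Ei, 0 ≤ sigmaH δE e := by
    intro e he
    exact div_nonneg (hδE e (hEi he)).le (by positivity)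
  have hlamnn : ∀ (E0 : Finset (Finset V)), E0 ⊆ E →
      0 ≤ ∑ e ∈ E0, δE e / (c * (e.card : ℝ)) := by
    intro E0 hE0
    refine Finset.sum_nonneg (fun e he => ?_)
    exact div_nonneg (hδE e (hE0 he)).le (mul_nonneg hc0.le (Nat.cast_nonneg _))
  have hlam1nn : 0 ≤ lam1 := hlamnn Ei hEi
  have hlam2nn : 0 ≤ lam2 := hlamnn Ej hEj
  have hlam3nn : 0 ≤ lam3 := by
    refine mul_nonneg (one_div_nonneg.mpr hc0.le) (Finset.sum_nonneg (fun e he => ?_))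
    exact mul_nonneg (hσnn e he) (Nat.cast_nonneg _)
  set r1 : ℝ := Mg + ε * lam1 * Mf with hr1
  set r2 : ℝ := Mg + ε * lam2 * Mf with hr2
  set r3 : ℝ := Mg + ε * lam3 * Mf with hr3
  have hr1lt : r1 < 1 := hstab _ (Set.mem_insert _ _)
  have hr2lt : r2 < 1 := hstab _ (Set.mem_insert_of_mem _ (Set.mem_insert _ _))
  have hr3lt : r3 < 1 :=
    hstab _ (Set.mem_insert_of_mem _ (Set.mem_insert_of_mem _ rfl))
  have hrnn : ∀ lam : ℝ, 0 ≤ lam → 0 ≤ Mg + ε * lam * Mf := by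
    intro lam hl
    exact add_nonneg Mg0 (mul_nonneg (mul_nonneg hε0.le hl) Mf0)
  have hr1nn : 0 ≤ r1 := hrnn lam1 hlam1nn
  have hr2nn : 0 ≤ r2 := hrnn lam2 hlam2nn
  have hr3nn : 0 ≤ r3 := hrnn lam3 hlam3nn
  set r : ℝ := max r1 r2 with hrdef
  set ρ : ℝ := max r r3 with hρdef
  have hrnn' : 0 ≤ r := le_trans hr1nn (le_max_left _ _)
  have hrlt : r < 1 := max_lt hr1lt hr2lt
  have hρnn : 0 ≤ ρ := le_trans hrnn' (le_max_left _ _)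
  have hρlt : ρ < 1 := max_lt hrlt hr3lt
  have hrρ : r ≤ ρ := le_max_left _ _
  have hr3ρ : r3 ≤ ρ := le_max_right _ _
  -- one-step contraction within a unit
  have key_same : ∀ (E0 : Finset (Finset V)), E0 ⊆ E → ∀ a b : V,
      starOf E a = E0 → starOf E b = E0 → δV a = c → δV b = c → ∀ t,
      |x (t + 1) a - x (t + 1) b|
        ≤ (Mg + ε * (∑ e ∈ E0, δE e / (c * (e.card : ℝ))) * Mf) * |x t a - x t b| := by
    intro E0 hE0 a b ha hb hca hcb t
    set lam : ℝ := ∑ e ∈ E0, δE e / (c * (e.card : ℝ)) with hlam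
    have hlnn : 0 ≤ lam := hlamnn E0 hE0
    have hL := Lop_sub_same E hE δV δE E0 hE0 ha hb hca hcb (fun w => f (x t w))
    rw [← hlam] at hL
    have heq : x (t + 1) a - x (t + 1) b
        = (g (x t a) - g (x t b)) + ε * (lam * (f (x t b) - f (x t a))) := by
      rw [hdyn t a, hdyn t b]
      linear_combination ε * hL
    have hgb := lip_of_deriv hg hg' (x t a) (x t b)
    have hfb := lip_of_deriv hf hf' (x t b) (x t a)
    rw [abs_sub_comm (x t b) (x t a)] at hfb
    calc |x (t + 1) a - x (t + 1) b|
        ≤ |g (x t a) - g (x t b)| + |ε * (lam * (f (x t b) - f (x t a)))| := by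
          rw [heq]; exact abs_add_le _ _
      _ = |g (x t a) - g (x t b)| + ε * lam * |f (x t b) - f (x t a)| := by
          rw [abs_mul, abs_mul, abs_of_pos hε0, abs_of_nonneg hlnn]; ring
      _ ≤ Mg * |x t a - x t b| + ε * lam * (Mf * |x t a - x t b|) :=
          add_le_add hgb (mul_le_mul_of_nonneg_left hfb (mul_nonneg hε0.le hlnn))
      _ = (Mg + ε * lam * Mf) * |x t a - x t b| := by ring
  -- the aggregated intra-unit disagreement
  set P : ℕ → ℝ := fun t =>
    (∑ a ∈ Wi, ∑ b ∈ Wi, |x t a - x t b|) + ∑ a ∈ Wj, ∑ b ∈ Wj, |x t a - x t b| with hP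
  have hPnn : ∀ t, 0 ≤ P t := by
    intro t
    refine add_nonneg ?_ ?_ <;>
      exact Finset.sum_nonneg fun a _ => Finset.sum_nonneg fun b _ => abs_nonneg _
  have hPstep : ∀ t, P (t + 1) ≤ r * P t := by
    intro t
    have h1 : ∑ a ∈ Wi, ∑ b ∈ Wi, |x (t + 1) a - x (t + 1) b|
        ≤ ∑ a ∈ Wi, ∑ b ∈ Wi, r * |x t a - x t b| := by
      refine Finset.sum_le_sum fun a ha => Finset.sum_le_sum fun b hb => ?_
      refine (key_same Ei hEi a b ((hmemi a).1 ha) ((hmemi b).1 hb)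
        (hc a (Finset.mem_union_left _ ha)) (hc b (Finset.mem_union_left _ hb)) t).trans ?_
      exact mul_le_mul_of_nonneg_right (le_max_left r1 r2) (abs_nonneg _)
    have h2 : ∑ a ∈ Wj, ∑ b ∈ Wj, |x (t + 1) a - x (t + 1) b|
        ≤ ∑ a ∈ Wj, ∑ b ∈ Wj, r * |x t a - x t b| := by
      refine Finset.sum_le_sum fun a ha => Finset.sum_le_sum fun b hb => ?_
      refine (key_same Ej hEj a b ((hmemj a).1 ha) ((hmemj b).1 hb)
        (hc a (Finset.mem_union_right _ ha)) (hc b (Finset.mem_union_right _ hb)) t).trans ?_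
      exact mul_le_mul_of_nonneg_right (le_max_right r1 r2) (abs_nonneg _)
    calc P (t + 1)
        ≤ (∑ a ∈ Wi, ∑ b ∈ Wi, r * |x t a - x t b|)
          + ∑ a ∈ Wj, ∑ b ∈ Wj, r * |x t a - x t b| := add_le_add h1 h2
      _ = r * P t := by simp only [hP, ← Finset.mul_sum]; ring
  have hPt : ∀ t, P t ≤ r ^ t * P 0 := by
    intro t
    induction t with
    | zero => simp
    | succ t ih =>
      calc P (t + 1) ≤ r * P t := hPstep t
        _ ≤ r * (r ^ t * P 0) := mul_le_mul_of_nonneg_left ih hrnn'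
        _ = r ^ (t + 1) * P 0 := by rw [pow_succ]; ring
  have hpairi : ∀ a ∈ Wi, ∀ b ∈ Wi, ∀ t, |x t a - x t b| ≤ P t := by
    intro a ha b hb t
    have h1 : |x t a - x t b| ≤ ∑ b' ∈ Wi, |x t a - x t b'| :=
      Finset.single_le_sum (f := fun b' => |x t a - x t b'|) (fun i _ => abs_nonneg _) hb
    have h2 : ∑ b' ∈ Wi, |x t a - x t b'| ≤ ∑ a' ∈ Wi, ∑ b' ∈ Wi, |x t a' - x t b'| :=
      Finset.single_le_sum (f := fun a' => ∑ b' ∈ Wi, |x t a' - x t b'|)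
        (fun i _ => Finset.sum_nonneg fun b' _ => abs_nonneg _) ha
    refine (h1.trans h2).trans ?_
    exact le_add_of_nonneg_right
      (Finset.sum_nonneg fun a' _ => Finset.sum_nonneg fun b' _ => abs_nonneg _)
  have hpairj : ∀ a ∈ Wj, ∀ b ∈ Wj, ∀ t, |x t a - x t b| ≤ P t := by
    intro a ha b hb t
    have h1 : |x t a - x t b| ≤ ∑ b' ∈ Wj, |x t a - x t b'| :=
      Finset.single_le_sum (f := fun b' => |x t a - x t b'|) (fun i _ => abs_nonneg _) hb
    have h2 : ∑ b' ∈ Wj, |x t a - x t b'| ≤ ∑ a' ∈ Wj, ∑ b' ∈ Wj, |x t a' - x t b'| :=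
      Finset.single_le_sum (f := fun a' => ∑ b' ∈ Wj, |x t a' - x t b'|)
        (fun i _ => Finset.sum_nonneg fun b' _ => abs_nonneg _) ha
    refine le_add_of_nonneg_left ?_ |>.trans' (h1.trans h2)
    exact Finset.sum_nonneg fun a' _ => Finset.sum_nonneg fun b' _ => abs_nonneg _
  -- convergence within a unit
  have conv_same : ∀ (E0 : Finset (Finset V)), E0 ⊆ E →
      (Mg + ε * (∑ e ∈ E0, δE e / (c * (e.card : ℝ))) * Mf) < 1 → ∀ a b : V,
      starOf E a = E0 → starOf E b = E0 → δV a = c → δV b = c →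
      Tendsto (fun t : ℕ => |x t a - x t b|) atTop (nhds 0) := by
    intro E0 hE0 hlt a b ha hb hca hcb
    exact conv_of_contract (hrnn _ (hlamnn E0 hE0)) hlt _ (fun t => abs_nonneg _)
      (fun t => key_same E0 hE0 a b ha hb hca hcb t)
  -- the cross case
  have conv_cross : ∀ u ∈ Wi, ∀ v ∈ Wj,
      Tendsto (fun t : ℕ => |x t u - x t v|) atTop (nhds 0) := by
    intro u hu v hv
    have hu' : starOf E u = Ei := (hmemi u).1 hu
    have hv' : starOf E v = Ej := (hmemj v).1 hv
    have hcu : δV u = c := hc u (Finset.mem_union_left _ hu)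
    have hcv : δV v = c := hc v (Finset.mem_union_right _ hv)
    set K : ℝ := (1 / c) * ∑ e ∈ Ei, sigmaH δE e
        * (((e ∩ Wi).card : ℝ) + ((φ e ∩ Wj).card : ℝ)) with hK
    have hKnn : 0 ≤ K := by
      refine mul_nonneg (one_div_nonneg.mpr hc0.le) (Finset.sum_nonneg fun e he => ?_)
      exact mul_nonneg (hσnn e he)
        (add_nonneg (Nat.cast_nonneg _) (Nat.cast_nonneg _))
    have cross_step : ∀ t, |x (t + 1) u - x (t + 1) v|
        ≤ r3 * |x t u - x t v| + ε * Mf * K * P t := by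
      intro t
      have hL := Lop_sub_cross E δV δE Ei Ej Wi Wj φ hφ htwin hσ hu' hv' hcu hcv
        (fun w => f (x t w))
      set S : ℝ := ∑ e ∈ Ei, sigmaH δE e *
          ((∑ w ∈ e ∩ Wi, (f (x t w) - f (x t u)))
            - ∑ w ∈ φ e ∩ Wj, (f (x t w) - f (x t v))) with hS
      have heq : x (t + 1) u - x (t + 1) v
          = (g (x t u) - g (x t v))
            + ε * (-(lam3) * (f (x t u) - f (x t v)) + (1 / c) * S) := by
        rw [hdyn t u, hdyn t v, hlam3, hS]
        linear_combination ε * hL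
      have hSbound : |S| ≤ (c * K) * (Mf * P t) := by
        have hterm : ∀ e ∈ Ei,
            |sigmaH δE e * ((∑ w ∈ e ∩ Wi, (f (x t w) - f (x t u)))
              - ∑ w ∈ φ e ∩ Wj, (f (x t w) - f (x t v)))|
            ≤ sigmaH δE e * ((((e ∩ Wi).card : ℝ) + ((φ e ∩ Wj).card : ℝ)) * (Mf * P t)) := by
          intro e he
          rw [abs_mul, abs_of_nonneg (hσnn e he)]
          refine mul_le_mul_of_nonneg_left ?_ (hσnn e he)
          have hA : |∑ w ∈ e ∩ Wi, (f (x t w) - f (x t u))|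
              ≤ ((e ∩ Wi).card : ℝ) * (Mf * P t) := by
            refine (Finset.abs_sum_le_sum_abs _ _).trans ?_
            have := Finset.sum_le_card_nsmul (e ∩ Wi)
              (fun w => |f (x t w) - f (x t u)|) (Mf * P t) ?_
            · simpa [nsmul_eq_mul] using this
            · intro w hw
              refine (lip_of_deriv hf hf' (x t w) (x t u)).trans ?_
              exact mul_le_mul_of_nonneg_left
                (hpairi w (Finset.mem_of_mem_inter_right hw) u hu t) Mf0
          have hB : |∑ w ∈ φ e ∩ Wj, (f (x t w) - f (x t v))|
              ≤ ((φ e ∩ Wj).card : ℝ) * (Mf * P t) := by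
            refine (Finset.abs_sum_le_sum_abs _ _).trans ?_
            have := Finset.sum_le_card_nsmul (φ e ∩ Wj)
              (fun w => |f (x t w) - f (x t v)|) (Mf * P t) ?_
            · simpa [nsmul_eq_mul] using this
            · intro w hw
              refine (lip_of_deriv hf hf' (x t w) (x t v)).trans ?_
              exact mul_le_mul_of_nonneg_left
                (hpairj w (Finset.mem_of_mem_inter_right hw) v hv t) Mf0
          calc |(∑ w ∈ e ∩ Wi, (f (x t w) - f (x t u)))
                - ∑ w ∈ φ e ∩ Wj, (f (x t w) - f (x t v))|
              ≤ |∑ w ∈ e ∩ Wi, (f (x t w) - f (x t u))|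
                + |∑ w ∈ φ e ∩ Wj, (f (x t w) - f (x t v))| := abs_sub _ _
            _ ≤ ((e ∩ Wi).card : ℝ) * (Mf * P t)
                + ((φ e ∩ Wj).card : ℝ) * (Mf * P t) := add_le_add hA hB
            _ = (((e ∩ Wi).card : ℝ) + ((φ e ∩ Wj).card : ℝ)) * (Mf * P t) := by ring
        calc |S| ≤ ∑ e ∈ Ei, |sigmaH δE e *
              ((∑ w ∈ e ∩ Wi, (f (x t w) - f (x t u)))
                - ∑ w ∈ φ e ∩ Wj, (f (x t w) - f (x t v)))| :=
            Finset.abs_sum_le_sum_abs _ _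
          _ ≤ ∑ e ∈ Ei, sigmaH δE e
              * ((((e ∩ Wi).card : ℝ) + ((φ e ∩ Wj).card : ℝ)) * (Mf * P t)) :=
            Finset.sum_le_sum hterm
          _ = (c * K) * (Mf * P t) := by
            have hcK : c * K = ∑ e ∈ Ei, sigmaH δE e
                * (((e ∩ Wi).card : ℝ) + ((φ e ∩ Wj).card : ℝ)) := by
              rw [hK, ← mul_assoc, mul_one_div, div_self hc0.ne', one_mul]
            rw [hcK, Finset.sum_mul]
            exact Finset.sum_congr rfl fun e he => by ring
      have hgb := lip_of_deriv hg hg' (x t u) (x t v)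
      have hfb := lip_of_deriv hf hf' (x t u) (x t v)
      calc |x (t + 1) u - x (t + 1) v|
          ≤ |g (x t u) - g (x t v)|
            + (ε * lam3 * |f (x t u) - f (x t v)| + ε * (1 / c) * |S|) := by
            rw [heq]
            refine (abs_add_le _ _).trans (add_le_add_right ?_ _)
            rw [mul_add]
            refine (abs_add_le _ _).trans ?_
            rw [abs_mul ε, abs_mul ε, abs_mul, abs_mul, abs_neg, abs_of_pos hε0,
              abs_of_nonneg hlam3nn, abs_of_nonneg (one_div_nonneg.mpr hc0.le)]
            exact le_of_eq (by ring)
        _ ≤ Mg * |x t u - x t v|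
            + (ε * lam3 * (Mf * |x t u - x t v|) + ε * (1 / c) * ((c * K) * (Mf * P t))) := by
            refine add_le_add hgb (add_le_add ?_ ?_)
            · exact mul_le_mul_of_nonneg_left hfb (mul_nonneg hε0.le hlam3nn)
            · exact mul_le_mul_of_nonneg_left hSbound
                (mul_nonneg hε0.le (one_div_nonneg.mpr hc0.le))
        _ = r3 * |x t u - x t v| + ε * Mf * K * P t := by
            have hcc : c * c⁻¹ = 1 := mul_inv_cancel₀ hc0.ne'
            have h1c : ε * (1 / c) * ((c * K) * (Mf * P t)) = ε * Mf * K * P t := by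
              linear_combination (ε * K * Mf * P t) * hcc
            rw [hr3, h1c]
            ring
    -- the two-scale induction
    set C : ℝ := ε * Mf * K * P 0 with hC
    have hCnn : 0 ≤ C := by
      exact mul_nonneg (mul_nonneg (mul_nonneg hε0.le Mf0) hKnn) (hPnn 0)
    have hbound : ∀ t, |x t u - x t v|
        ≤ ρ ^ t * |x 0 u - x 0 v| + C * ((t : ℝ) * ρ ^ (t - 1)) := by
      intro t
      induction t with
      | zero => simp
      | succ t ih =>
        have hstep' : |x (t + 1) u - x (t + 1) v|
            ≤ ρ * |x t u - x t v| + C * ρ ^ t := by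
          refine (cross_step t).trans ?_
          refine add_le_add (mul_le_mul_of_nonneg_right hr3ρ (abs_nonneg _)) ?_
          calc ε * Mf * K * P t ≤ ε * Mf * K * (r ^ t * P 0) :=
              mul_le_mul_of_nonneg_left (hPt t)
                (mul_nonneg (mul_nonneg hε0.le Mf0) hKnn)
            _ ≤ ε * Mf * K * (ρ ^ t * P 0) := by
              refine mul_le_mul_of_nonneg_left
                (mul_le_mul_of_nonneg_right (pow_le_pow_left₀ hrnn' hrρ t) (hPnn 0))
                (mul_nonneg (mul_nonneg hε0.le Mf0) hKnn)
            _ = C * ρ ^ t := by rw [hC]; ring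
        have hmagic : ρ * ((t : ℝ) * ρ ^ (t - 1)) + ρ ^ t
            = (((t : ℕ) + 1 : ℕ) : ℝ) * ρ ^ ((t + 1) - 1) := by
          cases t with
          | zero => simp
          | succ s =>
            simp only [Nat.add_sub_cancel]
            push_cast
            ring
        calc |x (t + 1) u - x (t + 1) v|
            ≤ ρ * |x t u - x t v| + C * ρ ^ t := hstep'
          _ ≤ ρ * (ρ ^ t * |x 0 u - x 0 v| + C * ((t : ℝ) * ρ ^ (t - 1))) + C * ρ ^ t :=
            add_le_add_left (mul_le_mul_of_nonneg_left ih hρnn) _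
          _ = ρ ^ (t + 1) * |x 0 u - x 0 v|
              + C * (ρ * ((t : ℝ) * ρ ^ (t - 1)) + ρ ^ t) := by rw [pow_succ]; ring
          _ = ρ ^ (t + 1) * |x 0 u - x 0 v|
              + C * ((((t + 1 : ℕ)) : ℝ) * ρ ^ ((t + 1) - 1)) := by rw [hmagic]
    have htend : Tendsto (fun t : ℕ =>
        ρ ^ t * |x 0 u - x 0 v| + C * ((t : ℝ) * ρ ^ (t - 1))) atTop (nhds 0) := by
      have h1 := (tendsto_pow_atTop_nhds_zero_of_lt_one hρnn hρlt).mul_const |x 0 u - x 0 v|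
      have h2 := (nmulpow_tendsto hρnn hρlt).const_mul C
      have := h1.add h2
      simpa using this
    exact squeeze_zero (fun t => abs_nonneg _) hbound htend
  -- case analysis
  intro u hu v hv
  rcases Finset.mem_union.1 hu with hui | huj <;> rcases Finset.mem_union.1 hv with hvi | hvj
  · exact conv_same Ei hEi hr1lt u v ((hmemi u).1 hui) ((hmemi v).1 hvi)
      (hc u (Finset.mem_union_left _ hui)) (hc v (Finset.mem_union_left _ hvi))
  · exact conv_cross u hui v hvj
  · have := conv_cross v hvi u huj
    simpa [abs_sub_comm] using this
  · exact conv_same Ej hEj hr2lt u v ((hmemj u).1 huj) ((hmemj v).1 hvj)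
      (hc u (Finset.mem_union_right _ huj)) (hc v (Finset.mem_union_right _ hvj))
end

section
/- Let f, g : ℝ → ℝ be differentiable, let t ↦ x_t be a continuous dynamical network on H, let W_{E_0} be a unit of H with δ_V(v) = c for all v ∈ W_{E_0}, and set λ = Σ_{e∈E_0} δ_E(e)/(c·|e|). Suppose there is μ > 0 such that g′(s) − ε·λ·f′(s) ≤ −μ for all s ∈ ℝ. Then for all u, v ∈ W_{E_0} and all t ≥ 0: |x_t(u) − x_t(v)| ≤ e^{−μt}·|x_0(u) − x_0(v)|; in particular |x_t(u) − x_t(v)| → 0 as t → ∞, so cluster synchronization in W_{E_0} is stable under small perturbations. -/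
open Finset Filter

/-- Stability of cluster synchronization in a unit for continuous-time
dynamical networks: if `g′(s) − ε·λ·f′(s) ≤ −μ` for all `s`, with
`λ = Σ_{e∈E₀} δE e/(c·|e|)` and `μ > 0`, then differences of states of two
vertices of the unit decay like `e^{-μt}`; in particular they tend to `0`. -/
theorem unit_cluster_sync_stable_continuous
    {V : Type*} [Fintype V] [DecidableEq V]
    (E : Finset (Finset V)) (hE : ∀ e ∈ E, 2 ≤ e.card)
    (δV : V → ℝ) (hδV : ∀ v, 0 < δV v)
    (δE : Finset V → ℝ) (hδE : ∀ e ∈ E, 0 < δE e)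
    (f g : ℝ → ℝ) (hf : Differentiable ℝ f) (hg : Differentiable ℝ g)
    (ε : ℝ) (hε : ε ∈ Set.Ioo (0 : ℝ) 1)
    (x : ℝ → V → ℝ)
    (hdyn : ∀ v : V, ∀ t : ℝ, 0 ≤ t →
      HasDerivAt (fun s => x s v)
        (g (x t v) + ε * Lop E δV δE (fun u => f (x t u)) v) t)
    (E₀ : Finset (Finset V)) (hE₀ : E₀ ⊆ E)
    (hne : (unitOf E E₀).Nonempty)
    (c : ℝ) (hc : ∀ v ∈ unitOf E E₀, δV v = c)
    (μ : ℝ) (hμ : 0 < μ)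
    (hcond : ∀ s : ℝ,
      deriv g s - ε * (∑ e ∈ E₀, δE e / (c * (e.card : ℝ))) * deriv f s ≤ -μ) :
    ∀ u ∈ unitOf E E₀, ∀ v ∈ unitOf E E₀,
      (∀ t : ℝ, 0 ≤ t →
        |x t u - x t v| ≤ Real.exp (-μ * t) * |x 0 u - x 0 v|)
      ∧ Tendsto (fun t : ℝ => |x t u - x t v|) atTop (nhds 0) := by
  obtain ⟨hε0, hε1⟩ := hε
  intro u hu v hv
  set lam : ℝ := ∑ e ∈ E₀, δE e / (c * (e.card : ℝ)) with hlam
  have hc0 : 0 < c := by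
    obtain ⟨w, hw⟩ := hne
    have := hδV w
    rwa [hc w hw] at this
  have hstar : ∀ w ∈ unitOf E E₀, E.filter (fun e => w ∈ e) = E₀ := by
    intro w hw
    have := (Finset.mem_filter.mp hw).2
    simpa [starOf] using this
  -- the key Lop difference identity
  have hLop : ∀ y : V → ℝ,
      Lop E δV δE y u - Lop E δV δE y v = -(lam * (y u - y v)) := by
    intro y
    unfold Lop
    rw [hstar u hu, hstar v hv, hc u hu, hc v hv, ← Finset.sum_sub_distrib]
    have hterm : ∀ e ∈ E₀,
        (δE e / c) * (1 / (e.card : ℝ) ^ 2) * (∑ w ∈ e, (y w - y u))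
          - (δE e / c) * (1 / (e.card : ℝ) ^ 2) * (∑ w ∈ e, (y w - y v))
        = -(δE e / (c * (e.card : ℝ)) * (y u - y v)) := by
      intro e he
      have hcard : (0 : ℝ) < (e.card : ℝ) := by
        have h2 := hE e (hE₀ he)
        exact_mod_cast lt_of_lt_of_le (by norm_num) h2
      have hsum : (∑ w ∈ e, (y w - y u)) - (∑ w ∈ e, (y w - y v))
          = (e.card : ℝ) * (y v - y u) := by
        rw [← Finset.sum_sub_distrib]
        have : ∀ w ∈ e, (y w - y u) - (y w - y v) = y v - y u := by
          intro w _; ring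
        rw [Finset.sum_congr rfl this, Finset.sum_const, nsmul_eq_mul]
      have h1 : (δE e / c) * (1 / (e.card : ℝ) ^ 2) * (∑ w ∈ e, (y w - y u))
          - (δE e / c) * (1 / (e.card : ℝ) ^ 2) * (∑ w ∈ e, (y w - y v))
          = (δE e / c) * (1 / (e.card : ℝ) ^ 2)
            * ((∑ w ∈ e, (y w - y u)) - (∑ w ∈ e, (y w - y v))) := by ring
      rw [h1, hsum]
      field_simp
      ring
    rw [Finset.sum_congr rfl hterm, hlam]
    rw [Finset.sum_neg_distrib, Finset.sum_mul]
  -- the difference function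
  set d : ℝ → ℝ := fun t => x t u - x t v with hd_def
  have hd : ∀ t : ℝ, 0 ≤ t → HasDerivAt d
      ((g (x t u) - g (x t v)) - ε * lam * (f (x t u) - f (x t v))) t := by
    intro t ht
    have h := (hdyn u t ht).sub (hdyn v t ht)
    have heq : g (x t u) + ε * Lop E δV δE (fun w => f (x t w)) u
        - (g (x t v) + ε * Lop E δV δE (fun w => f (x t w)) v)
        = (g (x t u) - g (x t v)) - ε * lam * (f (x t u) - f (x t v)) := by
      have := hLop (fun w => f (x t w))
      nlinarith [this]
    rwa [heq] at h
  -- the auxiliary antitone function H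
  set H : ℝ → ℝ := fun s => g s - ε * lam * f s + μ * s with hH_def
  have hHd : ∀ s : ℝ, HasDerivAt H (deriv g s - ε * lam * deriv f s + μ) s := by
    intro s
    exact (((hg s).hasDerivAt.sub (((hf s).hasDerivAt).const_mul (ε * lam))).add
      ((hasDerivAt_id s).const_mul μ)).congr_deriv (by ring)
  have hHanti : Antitone H := by
    apply antitone_of_hasDerivAt_nonpos hHd
    intro s
    simp only [Pi.zero_apply]
    linarith [hcond s]
  have hkey : ∀ a b : ℝ,
      (a - b) * ((g a - g b) - ε * lam * (f a - f b)) ≤ -μ * (a - b) ^ 2 := by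
    intro a b
    rcases le_total a b with hab | hab
    · have := hHanti hab
      simp only [hH_def] at this
      nlinarith
    · have := hHanti hab
      simp only [hH_def] at this
      nlinarith
  -- the Lyapunov function z
  set z : ℝ → ℝ := fun t => (Real.exp (μ * t) * d t) ^ 2 with hz_def
  have hz : ∀ t : ℝ, 0 ≤ t → HasDerivAt z
      (2 * (Real.exp (μ * t) * d t) *
        (μ * Real.exp (μ * t) * d t +
          Real.exp (μ * t) *
            ((g (x t u) - g (x t v)) - ε * lam * (f (x t u) - f (x t v))))) t := by
    intro t ht
    have hexp : HasDerivAt (fun s => Real.exp (μ * s)) (μ * Real.exp (μ * t)) t := by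
      have := (Real.hasDerivAt_exp (μ * t)).comp t ((hasDerivAt_id t).const_mul μ)
      exact this.congr_deriv (by ring)
    have hy := hexp.mul (hd t ht)
    have := hy.pow 2
    refine this.congr_deriv ?_
    norm_num only [Pi.mul_apply]
    ring
  have hzanti : AntitoneOn z (Set.Ici (0 : ℝ)) := by
    apply antitoneOn_of_deriv_nonpos (convex_Ici 0)
    · intro t ht
      exact (hz t ht).continuousAt.continuousWithinAt
    · intro t ht
      rw [interior_Ici] at ht
      exact ((hz t (le_of_lt ht)).differentiableAt).differentiableWithinAt
    · intro t ht
      rw [interior_Ici] at ht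
      rw [(hz t (le_of_lt ht)).deriv]
      have hk : d t * (g (x t u) - g (x t v) - ε * lam * (f (x t u) - f (x t v)))
          ≤ -μ * (d t) ^ 2 := hkey (x t u) (x t v)
      have hep : 0 < Real.exp (μ * t) := Real.exp_pos _
      have heq : 2 * (Real.exp (μ * t) * d t) *
          (μ * Real.exp (μ * t) * d t +
            Real.exp (μ * t) *
              ((g (x t u) - g (x t v)) - ε * lam * (f (x t u) - f (x t v))))
          = 2 * Real.exp (μ * t) ^ 2 *
            (μ * d t ^ 2 +
              d t * (g (x t u) - g (x t v) - ε * lam * (f (x t u) - f (x t v)))) := by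
        ring
      rw [heq]
      have hnp : μ * d t ^ 2 +
          d t * (g (x t u) - g (x t v) - ε * lam * (f (x t u) - f (x t v))) ≤ 0 := by
        linarith
      nlinarith [sq_nonneg (Real.exp (μ * t))]
  have hmain : ∀ t : ℝ, 0 ≤ t →
      |x t u - x t v| ≤ Real.exp (-μ * t) * |x 0 u - x 0 v| := by
    intro t ht
    have hz0 : z t ≤ z 0 := hzanti (Set.self_mem_Ici) ht ht
    have hzt : z t = (Real.exp (μ * t) * d t) ^ 2 := rfl
    have hz00 : z 0 = (d 0) ^ 2 := by simp [hz_def]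
    have hep : 0 < Real.exp (μ * t) := Real.exp_pos _
    have habs : Real.exp (μ * t) * |d t| ≤ |d 0| := by
      have h1 : (Real.exp (μ * t) * |d t|) ^ 2 ≤ |d 0| ^ 2 := by
        rw [mul_pow, sq_abs, sq_abs]
        calc Real.exp (μ * t) ^ 2 * d t ^ 2 = (Real.exp (μ * t) * d t) ^ 2 := by ring
          _ ≤ (d 0) ^ 2 := by rw [← hzt, ← hz00]; exact hz0
      have h2 : 0 ≤ Real.exp (μ * t) * |d t| := by positivity
      nlinarith [abs_nonneg (d 0)]
    have : |d t| ≤ Real.exp (-(μ * t)) * |d 0| := by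
      rw [Real.exp_neg, inv_mul_eq_div, le_div_iff₀ hep, mul_comm]
      exact habs
    simpa [neg_mul, hd_def] using this
  refine ⟨hmain, ?_⟩
  have hlim : Tendsto (fun t : ℝ => Real.exp (-μ * t) * |x 0 u - x 0 v|)
      atTop (nhds 0) := by
    have h1 : Tendsto (fun t : ℝ => Real.exp (-μ * t)) atTop (nhds 0) := by
      have h2 : Tendsto (fun t : ℝ => μ * t) atTop atTop :=
        Tendsto.const_mul_atTop hμ tendsto_id
      exact (Real.tendsto_exp_neg_atTop_nhds_zero.comp h2).congr
        (fun t => by simp [Function.comp, neg_mul])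
    simpa using h1.mul_const |x 0 u - x 0 v|
  apply squeeze_zero' (Filter.eventually_atTop.mpr ⟨0, fun t _ => abs_nonneg _⟩)
    (Filter.eventually_atTop.mpr ⟨0, fun t ht => hmain t ht⟩) hlim
end

section
/- Let H be a connected hypergraph and let t ↦ x_t ∈ ℝ^V (t ≥ 0) be a differentiable solution of the diffusion equation ẋ_t = L(x_t). Then the network synchronizes asymptotically: for all u, v ∈ V, |x_t(u) − x_t(v)| → 0 as t → ∞; moreover there is a constant c such that x_t converges to the constant function c·χ_V as t → ∞. -/
open Finset Filter

/-- A hypergraph is connected if any two vertices are joined by an alternating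
sequence of vertices and hyperedges. -/
def HConnected {V : Type*} [Fintype V] [DecidableEq V] (E : Finset (Finset V)) : Prop :=
  ∀ u v : V, Relation.ReflTransGen (fun a b => ∃ e ∈ E, a ∈ e ∧ b ∈ e) u v

section Aux

set_option linter.unusedSectionVars false

variable {V : Type*} [Fintype V] [DecidableEq V]

lemma sum_filter_swap (E : Finset (Finset V)) (F : Finset V → V → ℝ) :
    ∑ v, ∑ e ∈ E.filter (fun e => v ∈ e), F e v = ∑ e ∈ E, ∑ v ∈ e, F e v := by
  simp_rw [Finset.sum_filter]
  rw [Finset.sum_comm]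
  refine Finset.sum_congr rfl fun e _ => ?_
  simp [Finset.sum_ite_mem]

lemma sum_sub_antisym (e : Finset V) (h : V → ℝ) :
    ∑ v ∈ e, ∑ u ∈ e, (h u - h v) = 0 := by
  simp only [Finset.sum_sub_distrib]
  rw [Finset.sum_comm, sub_self]

lemma edge_energy (e : Finset V) (f : V → ℝ) :
    ∑ v ∈ e, ∑ u ∈ e, (f u - f v) ^ 2
      = -(2 * ∑ v ∈ e, f v * ∑ u ∈ e, (f u - f v)) := by
  have key : ∑ v ∈ e, ∑ u ∈ e, ((f u - f v) ^ 2 + 2 * ((f u - f v) * f v)) = 0 := by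
    have h : ∀ u v : V, (f u - f v) ^ 2 + 2 * ((f u - f v) * f v)
        = (fun w => f w ^ 2) u - (fun w => f w ^ 2) v := fun u v => by ring
    simp_rw [h]
    exact sum_sub_antisym e _
  have expand : ∑ v ∈ e, ∑ u ∈ e, ((f u - f v) ^ 2 + 2 * ((f u - f v) * f v))
      = (∑ v ∈ e, ∑ u ∈ e, (f u - f v) ^ 2)
        + 2 * ∑ v ∈ e, f v * ∑ u ∈ e, (f u - f v) := by
    simp only [Finset.sum_add_distrib]
    congr 1
    rw [Finset.mul_sum]
    refine Finset.sum_congr rfl fun v _ => ?_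
    simp only [Finset.mul_sum]
    refine Finset.sum_congr rfl fun u _ => by ring
  linarith [key, expand]

lemma dV_mul_Lop (E : Finset (Finset V)) (δV : V → ℝ) (hδV : ∀ v, 0 < δV v)
    (δE : Finset V → ℝ) (x g : V → ℝ) (v : V) :
    δV v * (g v * Lop E δV δE x v)
      = ∑ e ∈ E.filter (fun e => v ∈ e),
          δE e * (1 / (e.card : ℝ) ^ 2) * (g v * ∑ u ∈ e, (x u - x v)) := by
  rw [Lop, Finset.mul_sum, Finset.mul_sum]
  refine Finset.sum_congr rfl fun e _ => ?_
  have h := (hδV v).ne'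
  have key : δE e / δV v * (1 / (e.card : ℝ) ^ 2) * ∑ u ∈ e, (x u - x v)
      = (δE e * (1 / (e.card : ℝ) ^ 2) * ∑ u ∈ e, (x u - x v)) / δV v := by ring
  rw [key, mul_comm (g v), div_mul_eq_mul_div, mul_div_assoc', mul_comm (δV v),
    mul_div_assoc, div_self h, mul_one]
  ring

/-- Divergence: the weighted sum of `Lop x` vanishes. -/
lemma sum_dV_Lop (E : Finset (Finset V)) (δV : V → ℝ) (hδV : ∀ v, 0 < δV v)
    (δE : Finset V → ℝ) (x : V → ℝ) :
    ∑ v, δV v * Lop E δV δE x v = 0 := by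
  have h : ∀ v, δV v * Lop E δV δE x v
      = δV v * ((1 : ℝ) * Lop E δV δE x v) := fun v => by ring
  simp_rw [h, dV_mul_Lop E δV hδV δE x (fun _ => (1:ℝ)), one_mul]
  rw [sum_filter_swap]
  refine Finset.sum_eq_zero fun e _ => ?_
  have : ∑ v ∈ e, δE e * (1 / (e.card : ℝ) ^ 2) * ∑ u ∈ e, (x u - x v)
      = δE e * (1 / (e.card : ℝ) ^ 2) * ∑ v ∈ e, ∑ u ∈ e, (x u - x v) := by
    rw [Finset.mul_sum]
  rw [this, sum_sub_antisym, mul_zero]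

/-- The quadratic (Dirichlet) form of the hypergraph. -/
noncomputable def Qform (E : Finset (Finset V)) (δE : Finset V → ℝ) (y : V → ℝ) : ℝ :=
  ∑ e ∈ E, δE e * (1 / (e.card : ℝ) ^ 2) * ∑ v ∈ e, ∑ u ∈ e, (y u - y v) ^ 2

/-- Key identity: `2⟨y, Ly⟩ = -Q(y)`. -/
lemma two_sum_mul_Lop (E : Finset (Finset V)) (δV : V → ℝ) (hδV : ∀ v, 0 < δV v)
    (δE : Finset V → ℝ) (x : V → ℝ) :
    2 * ∑ v, δV v * (x v * Lop E δV δE x v) = - Qform E δE x := by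
  simp_rw [dV_mul_Lop E δV hδV δE x x]
  rw [sum_filter_swap, Qform]
  rw [Finset.mul_sum, ← Finset.sum_neg_distrib]
  refine Finset.sum_congr rfl fun e _ => ?_
  have h1 : ∑ v ∈ e, δE e * (1 / (e.card : ℝ) ^ 2) * (x v * ∑ u ∈ e, (x u - x v))
      = δE e * (1 / (e.card : ℝ) ^ 2) * ∑ v ∈ e, x v * ∑ u ∈ e, (x u - x v) := by
    rw [Finset.mul_sum]
  rw [h1, edge_energy e x]
  ring

/-- `Lop` is invariant under subtracting a constant. -/
lemma Lop_sub_const (E : Finset (Finset V)) (δV : V → ℝ) (δE : Finset V → ℝ)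
    (x : V → ℝ) (c : ℝ) :
    Lop E δV δE (fun v => x v - c) = Lop E δV δE x := by
  funext v
  rw [Lop, Lop]
  refine Finset.sum_congr rfl fun e _ => ?_
  congr 1
  exact Finset.sum_congr rfl fun u _ => by ring

lemma Qform_nonneg (E : Finset (Finset V)) (δE : Finset V → ℝ) (hδE : ∀ e ∈ E, 0 < δE e)
    (y : V → ℝ) : 0 ≤ Qform E δE y := by
  refine Finset.sum_nonneg fun e he => ?_
  refine mul_nonneg (mul_nonneg (hδE e he).le (by positivity)) ?_
  exact Finset.sum_nonneg fun v _ => Finset.sum_nonneg fun u _ => sq_nonneg _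

lemma Qform_smul (E : Finset (Finset V)) (δE : Finset V → ℝ) (r : ℝ) (y : V → ℝ) :
    Qform E δE (fun v => r * y v) = r ^ 2 * Qform E δE y := by
  rw [Qform, Qform, Finset.mul_sum]
  refine Finset.sum_congr rfl fun e _ => ?_
  rw [show ∀ B : ℝ, r ^ 2 * (δE e * (1 / (e.card : ℝ) ^ 2) * B) =
    δE e * (1 / (e.card : ℝ) ^ 2) * (r ^ 2 * B) from fun B => by ring]
  congr 1
  rw [Finset.mul_sum]
  refine Finset.sum_congr rfl fun v _ => ?_
  rw [Finset.mul_sum]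
  exact Finset.sum_congr rfl fun u _ => by ring

lemma Qform_eq_zero_const (E : Finset (Finset V)) (δE : Finset V → ℝ) (hδE : ∀ e ∈ E, 0 < δE e)
    (hconn : ∀ u v : V, Relation.ReflTransGen (fun a b => ∃ e ∈ E, a ∈ e ∧ b ∈ e) u v)
    (y : V → ℝ) (hQ : Qform E δE y = 0) : ∀ u v : V, y u = y v := by
  have hedge : ∀ e ∈ E, ∀ v ∈ e, ∀ u ∈ e, y u = y v := by
    intro e he v hv u hu
    have h1 : ∀ e ∈ E, 0 ≤ δE e * (1 / (e.card : ℝ) ^ 2) * ∑ v ∈ e, ∑ u ∈ e, (y u - y v) ^ 2 :=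
      fun e he => mul_nonneg (mul_nonneg (hδE e he).le (by positivity))
        (Finset.sum_nonneg fun v _ => Finset.sum_nonneg fun u _ => sq_nonneg _)
    have h2 := (Finset.sum_eq_zero_iff_of_nonneg h1).1 hQ e he
    have hcard : (0 : ℝ) < (e.card : ℝ) ^ 2 := by
      have : 0 < e.card := Finset.card_pos.2 ⟨v, hv⟩
      positivity
    have h3 : ∑ w ∈ e, ∑ z ∈ e, (y z - y w) ^ 2 = 0 := by
      have hpos : 0 < δE e * (1 / (e.card : ℝ) ^ 2) :=
        mul_pos (hδE e he) (by positivity)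
      by_contra hne
      exact hne (by
        rcases mul_eq_zero.1 h2 with h | h
        · exact absurd h hpos.ne'
        · exact h)
    have h4 := (Finset.sum_eq_zero_iff_of_nonneg
      (fun w _ => Finset.sum_nonneg fun z _ => sq_nonneg (y z - y w))).1 h3 v hv
    have h5 := (Finset.sum_eq_zero_iff_of_nonneg (fun z _ => sq_nonneg (y z - y v))).1 h4 u hu
    have := pow_eq_zero_iff (n := 2) (by norm_num) |>.1 h5
    linarith [sub_eq_zero.1 this]
  intro u v
  induction hconn u v with
  | refl => rfl
  | tail _ step ih =>
    obtain ⟨e, he, ha, hb⟩ := step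
    rw [ih] at *
    exact (hedge e he _ ha _ hb).symm

lemma spectral_gap (E : Finset (Finset V)) (δV : V → ℝ) (hδV : ∀ v, 0 < δV v)
    (δE : Finset V → ℝ) (hδE : ∀ e ∈ E, 0 < δE e)
    (hconn : ∀ u v : V, Relation.ReflTransGen (fun a b => ∃ e ∈ E, a ∈ e ∧ b ∈ e) u v) :
    ∃ lam > (0:ℝ), ∀ y : V → ℝ, (∑ v, δV v * y v = 0) →
      lam * ∑ v, δV v * (y v) ^ 2 ≤ Qform E δE y := by
  classical
  set K : Set (V → ℝ) :=
    {y | ∑ v, δV v * y v = 0 ∧ ∑ v, δV v * (y v) ^ 2 = 1} with hKdef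
  have clin : Continuous fun y : V → ℝ => ∑ v, δV v * y v :=
    continuous_finset_sum _ fun v _ => continuous_const.mul (continuous_apply v)
  have cquad : Continuous fun y : V → ℝ => ∑ v, δV v * (y v) ^ 2 :=
    continuous_finset_sum _ fun v _ => continuous_const.mul ((continuous_apply v).pow 2)
  have cQ : Continuous (Qform E δE) := by
    unfold Qform
    exact continuous_finset_sum _ fun e _ =>
      continuous_const.mul (continuous_finset_sum _ fun v _ => continuous_finset_sum _ fun u _ =>
        ((continuous_apply u).sub (continuous_apply v)).pow 2)
  have hKclosed : IsClosed K := by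
    have : K = {y | ∑ v, δV v * y v = 0} ∩ {y | ∑ v, δV v * (y v) ^ 2 = 1} := rfl
    rw [this]
    exact (isClosed_eq clin continuous_const).inter (isClosed_eq cquad continuous_const)
  have hKbdd : Bornology.IsBounded K := by
    rw [Metric.isBounded_iff_subset_closedBall 0]
    refine ⟨Real.sqrt (∑ v, 1 / δV v), fun y hy => ?_⟩
    rw [Metric.mem_closedBall, dist_zero_right]
    have hR : (0:ℝ) ≤ Real.sqrt (∑ v, 1 / δV v) := Real.sqrt_nonneg _
    rw [pi_norm_le_iff_of_nonneg hR]
    intro v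
    have h1 : δV v * (y v) ^ 2 ≤ 1 := by
      have := Finset.single_le_sum
        (f := fun w => δV w * (y w) ^ 2)
        (fun w _ => mul_nonneg (hδV w).le (sq_nonneg _)) (Finset.mem_univ v)
      rw [hy.2] at this
      exact this
    have h2 : (y v) ^ 2 ≤ 1 / δV v := by
      rw [le_div_iff₀ (hδV v)]
      linarith [h1]
    have h3 : 1 / δV v ≤ ∑ w, 1 / δV w :=
      Finset.single_le_sum (f := fun w => 1 / δV w)
        (fun w _ => by have := hδV w; positivity) (Finset.mem_univ v)
    have : |y v| ≤ Real.sqrt (∑ w, 1 / δV w) := by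
      rw [← Real.sqrt_sq_eq_abs]
      exact Real.sqrt_le_sqrt (by linarith)
    simpa [Real.norm_eq_abs] using this
  have hKcompact : IsCompact K := Metric.isCompact_iff_isClosed_bounded.2 ⟨hKclosed, hKbdd⟩
  have hsnonneg : ∀ y : V → ℝ, (0:ℝ) ≤ ∑ v, δV v * (y v) ^ 2 :=
    fun y => Finset.sum_nonneg fun v _ => mul_nonneg (hδV v).le (sq_nonneg _)
  have hscale : ∀ y : V → ℝ, (∑ v, δV v * y v = 0) →
      (0:ℝ) < (∑ v, δV v * (y v) ^ 2) →
      (fun v => (Real.sqrt (∑ w, δV w * (y w) ^ 2))⁻¹ * y v) ∈ K ∧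
      Qform E δE (fun v => (Real.sqrt (∑ w, δV w * (y w) ^ 2))⁻¹ * y v)
        = (∑ w, δV w * (y w) ^ 2)⁻¹ * Qform E δE y := by
    intro y hy0 hs
    set s := ∑ w, δV w * (y w) ^ 2 with hsdef
    have hsq : Real.sqrt s ^ 2 = s := Real.sq_sqrt hs.le
    refine ⟨⟨?_, ?_⟩, ?_⟩
    · have : ∑ v, δV v * ((Real.sqrt s)⁻¹ * y v) = (Real.sqrt s)⁻¹ * ∑ v, δV v * y v := by
        rw [Finset.mul_sum]; exact Finset.sum_congr rfl fun v _ => by ring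
      rw [this, hy0, mul_zero]
    · have : ∑ v, δV v * ((Real.sqrt s)⁻¹ * y v) ^ 2
          = ((Real.sqrt s)⁻¹) ^ 2 * ∑ v, δV v * (y v) ^ 2 := by
        rw [Finset.mul_sum]; exact Finset.sum_congr rfl fun v _ => by ring
      rw [this, inv_pow, hsq, ← hsdef, inv_mul_cancel₀ hs.ne']
    · rw [Qform_smul, inv_pow, hsq]
  by_cases hKne : K.Nonempty
  · obtain ⟨y₀, hy₀K, hmin⟩ := hKcompact.exists_isMinOn hKne cQ.continuousOn
    set lam := Qform E δE y₀ with hlam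
    have hlam_pos : 0 < lam := by
      rcases lt_or_eq_of_le (Qform_nonneg E δE hδE y₀) with h | h
      · exact h
      · exfalso
        have hconst := Qform_eq_zero_const E δE hδE hconn y₀ h.symm
        have hv0 : ∃ v₀ : V, y₀ v₀ ≠ 0 := by
          by_contra hcon
          push_neg at hcon
          have : ∑ v, δV v * (y₀ v) ^ 2 = 0 :=
            Finset.sum_eq_zero fun v _ => by rw [hcon v]; ring
          rw [hy₀K.2] at this
          norm_num at this
        obtain ⟨v₀, hv₀⟩ := hv0
        have hsum : ∑ v, δV v * y₀ v = y₀ v₀ * ∑ v, δV v := by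
          rw [Finset.mul_sum]
          exact Finset.sum_congr rfl fun v _ => by rw [hconst v v₀]; ring
        have hD : 0 < ∑ v, δV v :=
          Finset.sum_pos (fun v _ => hδV v) ⟨v₀, Finset.mem_univ v₀⟩
        have hzero := hy₀K.1
        rw [hsum] at hzero
        rcases mul_eq_zero.1 hzero with h' | h'
        · exact hv₀ h'
        · exact hD.ne' h'
    refine ⟨lam, hlam_pos, fun y hy0 => ?_⟩
    rcases eq_or_lt_of_le (hsnonneg y) with hs | hs
    · rw [← hs, mul_zero]
      exact Qform_nonneg E δE hδE y
    · obtain ⟨hzK, hzQ⟩ := hscale y hy0 hs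
      have h0 : Qform E δE y₀ ≤
          Qform E δE (fun v => (Real.sqrt (∑ w, δV w * (y w) ^ 2))⁻¹ * y v) := hmin hzK
      rw [hzQ] at h0
      calc lam * (∑ w, δV w * (y w) ^ 2)
          ≤ ((∑ w, δV w * (y w) ^ 2)⁻¹ * Qform E δE y) * (∑ w, δV w * (y w) ^ 2) :=
            mul_le_mul_of_nonneg_right h0 (hsnonneg y)
        _ = Qform E δE y := by field_simp
  · refine ⟨1, one_pos, fun y hy0 => ?_⟩
    rcases eq_or_lt_of_le (hsnonneg y) with hs | hs
    · rw [← hs, mul_zero]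
      exact Qform_nonneg E δE hδE y
    · exact absurd ((hscale y hy0 hs).1) (fun h => hKne ⟨_, h⟩)

lemma le_init_of_deriv_nonpos {g g' : ℝ → ℝ}
    (hg : ∀ t, (0:ℝ) ≤ t → HasDerivAt g (g' t) t) (h' : ∀ t, (0:ℝ) ≤ t → g' t ≤ 0) :
    ∀ t, 0 ≤ t → g t ≤ g 0 := by
  have hanti : AntitoneOn g (Set.Ici 0) := by
    apply antitoneOn_of_deriv_nonpos (convex_Ici 0)
    · exact fun t ht => (hg t ht).continuousAt.continuousWithinAt
    · intro t ht
      rw [interior_Ici] at ht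
      exact ((hg t (le_of_lt ht)).differentiableAt).differentiableWithinAt
    · intro t ht
      rw [interior_Ici] at ht
      rw [(hg t ht.le).deriv]
      exact h' t ht.le
  exact fun t ht => hanti Set.self_mem_Ici ht ht

lemma eq_init_of_deriv_zero {g : ℝ → ℝ} (hg : ∀ t, (0:ℝ) ≤ t → HasDerivAt g 0 t) :
    ∀ t, 0 ≤ t → g t = g 0 := by
  intro t ht
  have h1 := le_init_of_deriv_nonpos (g' := fun _ => 0) hg (fun _ _ => le_refl 0) t ht
  have h2 := le_init_of_deriv_nonpos (g := fun s => -g s) (g' := fun _ => 0)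
    (fun s hs => by simpa using (hg s hs).fun_neg) (fun _ _ => le_refl 0) t ht
  simp only [neg_le_neg_iff] at h2
  linarith

end Aux

/-- Any solution of the diffusion equation `ẋ = Lx` on a connected hypergraph
synchronizes asymptotically, and converges to a constant function. -/
theorem diffusion_asymptotic_sync {V : Type*} [Fintype V] [DecidableEq V]
    (E : Finset (Finset V)) (hE : ∀ e ∈ E, 2 ≤ e.card)
    (δV : V → ℝ) (hδV : ∀ v, 0 < δV v)
    (δE : Finset V → ℝ) (hδE : ∀ e ∈ E, 0 < δE e)
    (hconn : HConnected E)
    (x : ℝ → V → ℝ)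
    (hdyn : ∀ v : V, ∀ t : ℝ, 0 ≤ t →
      HasDerivAt (fun s => x s v) (Lop E δV δE (x t) v) t) :
    (∀ u v : V, Tendsto (fun t : ℝ => |x t u - x t v|) atTop (nhds 0))
    ∧ ∃ c : ℝ, Tendsto x atTop (nhds (fun _ => c)) := by
  classical
  rcases isEmpty_or_nonempty V with hVe | hVne
  · constructor
    · intro u; exact isEmptyElim u
    · refine ⟨0, ?_⟩
      have hx : x = fun _ => (fun v => (0:ℝ)) := by
        funext t v; exact isEmptyElim v
      rw [hx]
      exact tendsto_const_nhds
  obtain ⟨lam, hlam, hgap⟩ := spectral_gap E δV hδV δE hδE hconn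
  have hD : 0 < ∑ v, δV v :=
    Finset.sum_pos (fun v _ => hδV v) Finset.univ_nonempty
  set c : ℝ := (∑ v, δV v * x 0 v) / (∑ v, δV v) with hcdef
  -- the weighted mean is conserved
  have hS : ∀ t, (0:ℝ) ≤ t → ∑ v, δV v * x t v = ∑ v, δV v * x 0 v := by
    apply eq_init_of_deriv_zero
    intro t ht
    have h := HasDerivAt.fun_sum (u := Finset.univ)
      (fun v _ => ((hdyn v t ht).const_mul (δV v)))
    rwa [sum_dV_Lop E δV hδV δE (x t)] at h
  have hy0 : ∀ t, (0:ℝ) ≤ t → ∑ v, δV v * (x t v - c) = 0 := by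
    intro t ht
    have hcD : c * ∑ v, δV v = ∑ v, δV v * x 0 v := by
      rw [hcdef, div_mul_cancel₀ _ hD.ne']
    have hsplit : ∑ v, δV v * (x t v - c)
        = (∑ v, δV v * x t v) - c * ∑ v, δV v := by
      simp_rw [mul_sub]
      rw [Finset.sum_sub_distrib]
      congr 1
      rw [Finset.mul_sum]
      exact Finset.sum_congr rfl fun v _ => by ring
    rw [hsplit, hS t ht, hcD, sub_self]
  -- energy functional
  set f : ℝ → ℝ := fun t => ∑ v, δV v * (x t v - c) ^ 2 with hfdef
  have hf_deriv : ∀ t, (0:ℝ) ≤ t →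
      HasDerivAt f (-Qform E δE (fun v => x t v - c)) t := by
    intro t ht
    have h1 := HasDerivAt.fun_sum (u := Finset.univ)
      (fun v _ => ((((hdyn v t ht).sub_const c).pow 2).const_mul (δV v)))
    have hQ : -Qform E δE (fun v => x t v - c)
        = ∑ v, δV v * ((2:ℕ) * (x t v - c) ^ (2 - 1) * Lop E δV δE (x t) v) := by
      rw [← two_sum_mul_Lop E δV hδV δE (fun v => x t v - c),
        Lop_sub_const E δV δE (x t) c, Finset.mul_sum]
      exact Finset.sum_congr rfl fun v _ => by push_cast; ring
    rw [hQ]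
    exact h1
  have hf_nonneg : ∀ t, 0 ≤ f t :=
    fun t => Finset.sum_nonneg fun v _ => mul_nonneg (hδV v).le (sq_nonneg _)
  have hfderiv_le : ∀ t, (0:ℝ) ≤ t →
      -Qform E δE (fun v => x t v - c) ≤ -lam * f t := by
    intro t ht
    have h := hgap (fun v => x t v - c) (hy0 t ht)
    have : lam * f t ≤ Qform E δE (fun v => x t v - c) := h
    linarith
  -- Gronwall
  set g : ℝ → ℝ := fun t => f t * Real.exp (lam * t) with hgdef
  have hg_deriv : ∀ t, (0:ℝ) ≤ t → HasDerivAt g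
      (-Qform E δE (fun v => x t v - c) * Real.exp (lam * t)
        + f t * (Real.exp (lam * t) * (lam * 1))) t := by
    intro t ht
    exact (hf_deriv t ht).mul (((hasDerivAt_id t).const_mul lam).exp)
  have hg_le : ∀ t, (0:ℝ) ≤ t → g t ≤ g 0 := by
    apply le_init_of_deriv_nonpos hg_deriv
    intro t ht
    have h1 := hfderiv_le t ht
    have h2 := Real.exp_pos (lam * t)
    nlinarith [h1, h2]
  have hf_bound : ∀ t, (0:ℝ) ≤ t → f t ≤ f 0 * Real.exp (-(lam * t)) := by
    intro t ht
    have hg0 : g 0 = f 0 := by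
      simp [hgdef]
    have h := hg_le t ht
    rw [hg0] at h
    calc f t = (f t * Real.exp (lam * t)) * Real.exp (-(lam * t)) := by
          rw [mul_assoc, ← Real.exp_add]; simp
      _ ≤ f 0 * Real.exp (-(lam * t)) :=
          mul_le_mul_of_nonneg_right h (Real.exp_pos _).le
  have hf_tendsto : Tendsto f atTop (nhds 0) := by
    apply squeeze_zero' (Eventually.of_forall hf_nonneg)
      ((eventually_ge_atTop (0:ℝ)).mono fun t ht => hf_bound t ht)
    have h1 : Tendsto (fun t : ℝ => lam * t) atTop atTop :=
      Tendsto.const_mul_atTop hlam tendsto_id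
    have h2 : Tendsto (fun t : ℝ => Real.exp (-(lam * t))) atTop (nhds 0) :=
      Real.tendsto_exp_atBot.comp (tendsto_neg_atTop_atBot.comp h1)
    have h3 := h2.const_mul (f 0)
    simpa using h3
  have hxv : ∀ v : V, Tendsto (fun t => x t v) atTop (nhds c) := by
    intro v
    have hsq : Tendsto (fun t => (x t v - c) ^ 2) atTop (nhds 0) := by
      apply squeeze_zero' (Eventually.of_forall fun t => sq_nonneg _)
        (Eventually.of_forall fun t => ?_) (by simpa using hf_tendsto.const_mul (1 / δV v))
      have h1 : δV v * (x t v - c) ^ 2 ≤ f t :=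
        Finset.single_le_sum (f := fun w => δV w * (x t w - c) ^ 2)
          (fun w _ => mul_nonneg (hδV w).le (sq_nonneg _)) (Finset.mem_univ v)
      rw [inv_mul_eq_div, le_div_iff₀ (hδV v)]
      linarith [h1]
    have habs : Tendsto (fun t => |x t v - c|) atTop (nhds 0) := by
      have h := (Real.continuous_sqrt.tendsto 0).comp hsq
      simpa [Real.sqrt_sq_eq_abs, Function.comp_def] using h
    have hsub : Tendsto (fun t => x t v - c) atTop (nhds 0) :=
      (tendsto_zero_iff_abs_tendsto_zero _).2 habs
    have := hsub.add_const c
    simpa using this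
  constructor
  · intro u v
    have h := (hxv u).sub (hxv v)
    have h2 : Tendsto (fun t => x t u - x t v) atTop (nhds 0) := by
      simpa using h
    have h3 := h2.abs
    simpa using h3
  · exact ⟨c, tendsto_pi_nhds.2 hxv⟩
end
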